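/- arXiv:2111.11258 — 7 statements merged into one kernel-verified Lean document; each statement's English description precedes it below -/
import Mathlib

section
/- Let g = (g₁,…,g_r) be polynomials in ℝ[X₁,…,X_n] such that S = S(g) is nonempty and contained in [−1,1]ⁿ, and suppose the Constraint Qualification Condition holds at every point of S. Then there exists a constant 𝔠 > 0 such that dist(y, S) ≤ 𝔠 · G(y) for all y ∈ [−1,1]ⁿ, where dist is Euclidean distance; i.e., the Łojasiewicz exponent for g can be taken equal to 1. -/
open MvPolynomial Metric Set

noncomputable section

abbrev MvPoly (n : ℕ) := MvPolynomial (Fin n) ℝ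

/-- `p` is a sum of squares of polynomials. -/
def IsSOS {n : ℕ} (p : MvPoly n) : Prop :=
  ∃ (k : ℕ) (q : Fin k → MvPoly n), p = ∑ i, (q i) ^ 2

/-- Membership in the truncated quadratic module `Q_ℓ(g)`. -/
def InQM {n r : ℕ} (g : Fin r → MvPoly n) (ℓ : ℕ) (p : MvPoly n) : Prop :=
  ∃ (σ₀ : MvPoly n) (σ : Fin r → MvPoly n),
    IsSOS σ₀ ∧ (∀ i, IsSOS (σ i)) ∧
    σ₀.totalDegree ≤ ℓ ∧ (∀ i, (σ i * g i).totalDegree ≤ ℓ) ∧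
    p = σ₀ + ∑ i, σ i * g i

/-- The basic closed semialgebraic set `S(g)`. -/
def Sg {n r : ℕ} (g : Fin r → MvPoly n) : Set (EuclideanSpace ℝ (Fin n)) :=
  {x | ∀ i, 0 ≤ eval (fun j => x j) (g i)}

/-- The box `[-1,1]^n`. -/
def Box (n : ℕ) : Set (EuclideanSpace ℝ (Fin n)) :=
  {x | ∀ i, |x i| ≤ 1}

/-- Max norm of a polynomial over `[-1,1]^n`. -/
def boxNorm {n : ℕ} (f : MvPoly n) : ℝ :=
  sSup ((fun x : EuclideanSpace ℝ (Fin n) => |eval (fun j => x j) f|) '' Box n)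

/-- The algebraic distance `G(x) = |min{g₁(x),…,g_r(x),0}|`. -/
def Gfun {n r : ℕ} (g : Fin r → MvPoly n) (x : EuclideanSpace ℝ (Fin n)) : ℝ :=
  |min (⨅ i, eval (fun j => x j) (g i)) 0|

/-- Gradient of a polynomial at a point. -/
def polyGrad {n : ℕ} (p : MvPoly n) (x : EuclideanSpace ℝ (Fin n)) : EuclideanSpace ℝ (Fin n) :=
  WithLp.toLp 2 (fun j => eval (fun i => x i) (pderiv j p))

/-- Constraint Qualification Condition at `x`. -/
def CQC {n r : ℕ} (g : Fin r → MvPoly n) (x : EuclideanSpace ℝ (Fin n)) : Prop :=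
  LinearIndependent ℝ (fun i : {i : Fin r // eval (fun j => x j) (g i) = 0} => polyGrad (g i.1) x)

/- ### Auxiliary lemmas -/

lemma evalCont {n : ℕ} (p : MvPoly n) :
    Continuous fun x : EuclideanSpace ℝ (Fin n) => eval (fun j => x j) p := by
  have h1 : Continuous fun x : EuclideanSpace ℝ (Fin n) => (fun j => x j : Fin n → ℝ) :=
    continuous_pi fun j => (continuous_apply j).comp (PiLp.continuous_ofLp _ _)
  exact (MvPolynomial.continuous_eval p).comp h1

lemma hasDerivAt_eval_line {n : ℕ} (p : MvPoly n) (y d : Fin n → ℝ) (t : ℝ) :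
    HasDerivAt (fun s : ℝ => eval (fun j => y j + s * d j) p)
      (∑ j, eval (fun j' => y j' + t * d j') (pderiv j p) * d j) t := by
  induction p using MvPolynomial.induction_on with
  | C a => simpa [pderiv_C] using hasDerivAt_const t (a : ℝ)
  | add p q hp hq =>
      convert hp.add hq using 1
      · rfl
      · rfl
      · ext s; simp
      · rw [← Finset.sum_add_distrib]
        exact Finset.sum_congr rfl fun j _ => by simp [add_mul]
  | mul_X p i hp =>
      have hline : HasDerivAt (fun s : ℝ => y i + s * d i) (d i) t :=
        (hasDerivAt_mul_const (d i)).const_add (y i)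
      have := hp.mul hline
      convert this using 1
      · rfl
      · rfl
      · ext s; simp
      · have hXj : ∀ j : Fin n,
            eval (fun j' => y j' + t * d j') (pderiv j (X i : MvPoly n))
              = if j = i then 1 else 0 := by
          intro j
          rcases eq_or_ne j i with rfl | h
          · simp
          · simp [pderiv_X_of_ne h.symm, h]
        calc ∑ j, eval (fun j' => y j' + t * d j') (pderiv j (p * X i)) * d j
            = ∑ j, (eval (fun j' => y j' + t * d j') (pderiv j p) * (y i + t * d i)
                + eval (fun j' => y j' + t * d j') p * (if j = i then 1 else 0)) * d j := by
              refine Finset.sum_congr rfl fun j _ => ?_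
              rw [pderiv_mul]
              simp only [map_add, map_mul, eval_X, hXj j]
          _ = (∑ j, eval (fun j' => y j' + t * d j') (pderiv j p) * d j) * (y i + t * d i)
                + eval (fun j' => y j' + t * d j') p * d i := by
              rw [Finset.sum_mul]
              rw [show (∑ j, (eval (fun j' => y j' + t * d j') (pderiv j p) * (y i + t * d i)
                + eval (fun j' => y j' + t * d j') p * (if j = i then 1 else 0)) * d j)
                = ∑ j, ((eval (fun j' => y j' + t * d j') (pderiv j p) * d j) * (y i + t * d i)
                + eval (fun j' => y j' + t * d j') p * ((if j = i then 1 else 0) * d j)) from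
                Finset.sum_congr rfl fun j _ => by ring]
              rw [Finset.sum_add_distrib, ← Finset.sum_mul, ← Finset.mul_sum]
              congr 1
              simp [ite_mul]

lemma deriv_lower_bound (f f' : ℝ → ℝ) (c T : ℝ) (hT : 0 ≤ T)
    (hd : ∀ t, HasDerivAt f (f' t) t) (hc : ∀ t ∈ Icc (0:ℝ) T, c ≤ f' t) :
    f 0 + c * T ≤ f T := by
  set g : ℝ → ℝ := fun t => f t - c * t with hg
  have hgd : ∀ t, HasDerivAt g (f' t - c) t := fun t => by
    have h := (hd t).sub ((hasDerivAt_id t).const_mul c); rw [mul_one] at h; exact h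
  have hmono : MonotoneOn g (Icc 0 T) := by
    apply monotoneOn_of_deriv_nonneg (convex_Icc 0 T)
    · exact (Differentiable.continuous fun t => (hgd t).differentiableAt).continuousOn
    · exact fun t _ => (hgd t).differentiableAt.differentiableWithinAt
    · intro t ht
      rw [interior_Icc] at ht
      rw [(hgd t).deriv]
      have := hc t (Ioo_subset_Icc_self ht)
      linarith
  have := hmono (left_mem_Icc.2 hT) (right_mem_Icc.2 hT) hT
  simp only [hg] at this
  linarith

lemma exists_dual_vec {ι : Type*} [Fintype ι] {N : ℕ}
    (v : ι → EuclideanSpace ℝ (Fin N)) (hv : LinearIndependent ℝ v) :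
    ∃ d : EuclideanSpace ℝ (Fin N), ∀ i, (inner ℝ (v i) d : ℝ) = 1 := by
  classical
  set Gm : Matrix ι ι ℝ := Matrix.of fun i j => (inner ℝ (v i) (v j) : ℝ) with hGm
  have hmv : ∀ c : ι → ℝ, ∀ i, Gm.mulVec c i = (inner ℝ (v i) (∑ j, c j • v j) : ℝ) := by
    intro c i
    rw [inner_sum]
    simp only [real_inner_smul_right]
    simp only [Matrix.mulVec, dotProduct, hGm, Matrix.of_apply]
    exact Finset.sum_congr rfl fun j _ => mul_comm _ _
  have hinj : Function.Injective Gm.mulVecLin := by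
    rw [injective_iff_map_eq_zero]
    intro c hc
    have hc' : ∀ i, Gm.mulVec c i = 0 := fun i => congrFun hc i
    have h0 : (∑ j, c j • v j) = 0 := by
      rw [← inner_self_eq_zero (𝕜 := ℝ), sum_inner]
      simp only [real_inner_smul_left]
      refine Finset.sum_eq_zero fun i _ => ?_
      rw [← hmv c i, hc' i, mul_zero]
    have := Fintype.linearIndependent_iff.mp hv c h0
    funext i; exact this i
  have hsurj := (LinearMap.injective_iff_surjective_of_finrank_eq_finrank rfl).1 hinj
  obtain ⟨c, hc⟩ := hsurj (fun _ => 1)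
  exact ⟨∑ j, c j • v j, fun i => by rw [← hmv c i]; exact congrFun hc i⟩

lemma Gfun_nonneg {n r : ℕ} (g : Fin r → MvPoly n) (y : EuclideanSpace ℝ (Fin n)) :
    0 ≤ Gfun g y := abs_nonneg _

lemma neg_Gfun_le {n r : ℕ} (g : Fin r → MvPoly n) (y : EuclideanSpace ℝ (Fin n)) (i : Fin r) :
    -(Gfun g y) ≤ eval (fun j => y j) (g i) := by
  have h1 : min (⨅ i, eval (fun j => y j) (g i)) 0 ≤ 0 := min_le_right _ _
  have h2 : Gfun g y = -(min (⨅ i, eval (fun j => y j) (g i)) 0) := abs_of_nonpos h1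
  rw [h2, neg_neg]
  exact le_trans (min_le_left _ _)
    (ciInf_le (Set.Finite.bddBelow (Set.finite_range _)) i)

lemma Gfun_eq_zero {n r : ℕ} (g : Fin r → MvPoly n) (y : EuclideanSpace ℝ (Fin n))
    (hy : y ∈ Sg g) : Gfun g y = 0 := by
  rcases isEmpty_or_nonempty (Fin r) with h | h
  · simp [Gfun, iInf, Set.range_eq_empty, Real.sInf_empty]
  · have h1 : (0:ℝ) ≤ ⨅ i, eval (fun j => y j) (g i) := le_ciInf fun i => hy i
    rw [Gfun, min_eq_right h1, abs_zero]

lemma mem_Sg_of_Gfun_eq_zero {n r : ℕ} (g : Fin r → MvPoly n) (y : EuclideanSpace ℝ (Fin n))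
    (hy : Gfun g y = 0) : y ∈ Sg g := fun i => by
  have := neg_Gfun_le g y i
  rw [hy] at this; linarith

lemma Gfun_continuous {n r : ℕ} (g : Fin r → MvPoly n) : Continuous (Gfun g) := by
  rcases isEmpty_or_nonempty (Fin r) with h | h
  · have : Gfun g = fun _ => 0 := by
      funext y; simp [Gfun, iInf, Set.range_eq_empty, Real.sInf_empty]
    rw [this]; exact continuous_const
  · have key : ∀ y : EuclideanSpace ℝ (Fin n),
        (⨅ i, eval (fun j => y j) (g i))
          = Finset.univ.inf' Finset.univ_nonempty (fun i => eval (fun j => y j) (g i)) := by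
      intro y; rw [Finset.inf'_univ_eq_ciInf]
    unfold Gfun
    apply Continuous.abs
    apply Continuous.min _ continuous_const
    have : Continuous fun y : EuclideanSpace ℝ (Fin n) =>
        Finset.univ.inf' Finset.univ_nonempty (fun i => eval (fun j => y j) (g i)) := by
      apply Continuous.finset_inf'_apply
      exact fun i _ => evalCont (g i)
    exact this.congr fun y => (key y).symm

lemma local_bound {n r : ℕ} (g : Fin r → MvPoly n) (x : EuclideanSpace ℝ (Fin n))
    (hx : x ∈ Sg g) (hcq : CQC g x) :
    ∃ c : ℝ, 0 < c ∧ ∃ δ : ℝ, 0 < δ ∧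
      ∀ y, dist y x < δ → infDist y (Sg g) ≤ c * Gfun g y := by
  classical
  obtain ⟨d, hd⟩ := exists_dual_vec
    (fun i : {i : Fin r // eval (fun j => x j) (g i) = 0} => polyGrad (g i.1) x) hcq
  set F : Fin r → EuclideanSpace ℝ (Fin n) → ℝ :=
    fun i z => ∑ j, eval (fun k => z k) (pderiv j (g i)) * d j with hF
  have hFcont : ∀ i, Continuous (F i) := fun i =>
    continuous_finset_sum _ fun j _ => (evalCont _).mul continuous_const
  have hFx : ∀ i : Fin r, eval (fun j => x j) (g i) = 0 → F i x = 1 := by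
    intro i hi
    have h := hd ⟨i, hi⟩
    rw [PiLp.inner_apply] at h
    simpa [polyGrad, RCLike.inner_apply, conj_trivial, hF, mul_comm] using h
  set U : Set (EuclideanSpace ℝ (Fin n)) :=
    ⋂ i : Fin r, (if eval (fun j => x j) (g i) = 0 then F i ⁻¹' (Ioi (1/2 : ℝ))
      else (fun z : EuclideanSpace ℝ (Fin n) => eval (fun k => z k) (g i)) ⁻¹' (Ioi (0:ℝ)))
    with hU
  have hUopen : IsOpen U := by
    rw [hU]
    refine isOpen_iInter_of_finite fun i => ?_
    by_cases h : eval (fun j => x j) (g i) = 0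
    · rw [if_pos h]; exact isOpen_Ioi.preimage (hFcont i)
    · rw [if_neg h]; exact isOpen_Ioi.preimage (evalCont _)
  have hxU : x ∈ U := by
    rw [hU, mem_iInter]
    intro i
    by_cases h : eval (fun j => x j) (g i) = 0
    · rw [if_pos h]
      have : (1/2:ℝ) < F i x := by rw [hFx i h]; norm_num
      exact this
    · rw [if_neg h]
      exact lt_of_le_of_ne (hx i) (Ne.symm h)
  have hUmem : ∀ w ∈ U, ∀ i : Fin r,
      (eval (fun j => x j) (g i) = 0 → (1/2:ℝ) < F i w) ∧
      (eval (fun j => x j) (g i) ≠ 0 → 0 < eval (fun k => w k) (g i)) := by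
    intro w hw i
    rw [hU, mem_iInter] at hw
    constructor
    · intro h; have := hw i; rw [if_pos h] at this; exact this
    · intro h; have := hw i; rw [if_neg h] at this; exact this
  obtain ⟨ε, hε, hball⟩ := Metric.isOpen_iff.mp hUopen x hxU
  have hGx : Gfun g x = 0 := Gfun_eq_zero g x hx
  set η : ℝ := ε / (8 * (‖d‖ + 1)) with hη
  have hd0 : (0:ℝ) ≤ ‖d‖ := norm_nonneg d
  have hηpos : 0 < η := by positivity
  obtain ⟨δ₁, hδ₁pos, hδ₁⟩ :=
    Metric.continuousAt_iff.mp ((Gfun_continuous g).continuousAt (x := x)) η hηpos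
  refine ⟨2 * ‖d‖ + 1, by positivity, min δ₁ (ε/2), lt_min hδ₁pos (by positivity), ?_⟩
  intro y hy
  have hyε : dist y x < ε/2 := lt_of_lt_of_le hy (min_le_right _ _)
  have hGy : Gfun g y < η := by
    have := hδ₁ (lt_of_lt_of_le hy (min_le_left _ _))
    rw [Real.dist_eq, hGx, sub_zero] at this
    exact lt_of_le_of_lt (le_abs_self _) this
  have hGy0 : 0 ≤ Gfun g y := Gfun_nonneg g y
  set T : ℝ := 2 * Gfun g y with hT
  have hT0 : 0 ≤ T := by rw [hT]; linarith
  have hTη : T * ‖d‖ ≤ ε/4 := by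
    have h1 : T ≤ 2 * η := by rw [hT]; linarith
    have h2 : T * ‖d‖ ≤ 2 * η * ‖d‖ := by nlinarith
    have h3 : 2 * η * ‖d‖ ≤ ε/4 := by
      have hc : (0:ℝ) < 8 * (‖d‖ + 1) := by positivity
      have hq : η * (8 * (‖d‖ + 1)) = ε := div_mul_cancel₀ _ (ne_of_gt hc)
      nlinarith [le_of_lt hηpos]
    linarith
  have hseg : ∀ t ∈ Icc (0:ℝ) T, y + t • d ∈ ball x ε := by
    intro t ht
    have h1 : dist (y + t • d) x ≤ dist (y + t • d) y + dist y x := dist_triangle _ _ _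
    have h2 : dist (y + t • d) y = ‖t • d‖ := by
      rw [dist_comm, dist_self_add_right]
    have h3 : ‖t • d‖ = t * ‖d‖ := by
      rw [norm_smul, Real.norm_eq_abs, abs_of_nonneg ht.1]
    have h4 : t * ‖d‖ ≤ T * ‖d‖ := by nlinarith [ht.2]
    rw [mem_ball]
    calc dist (y + t • d) x ≤ ‖t • d‖ + dist y x := by rw [← h2]; exact h1
      _ ≤ ε/4 + ε/2 := by rw [h3]; linarith
      _ < ε := by linarith
  have hcoord : ∀ t : ℝ, (fun k => (y + t • d) k : Fin n → ℝ) = fun k => y k + t * d k := by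
    intro t; funext k
    simp [PiLp.add_apply, PiLp.smul_apply, smul_eq_mul]
  have hzS : y + T • d ∈ Sg g := by
    intro i
    by_cases h : eval (fun j => x j) (g i) = 0
    · have hder : ∀ t : ℝ, HasDerivAt (fun s => eval (fun k => y k + s * d k) (g i))
          (∑ j, eval (fun k => y k + t * d k) (pderiv j (g i)) * d j) t :=
        fun t => hasDerivAt_eval_line (g i) (fun k => y k) (fun k => d k) t
      have hlow : ∀ t ∈ Icc (0:ℝ) T,
          (1/2:ℝ) ≤ ∑ j, eval (fun k => y k + t * d k) (pderiv j (g i)) * d j := by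
        intro t ht
        have hmem := (hUmem _ (hball (hseg t ht)) i).1 h
        rw [hF] at hmem
        simp only [hcoord t] at hmem
        exact le_of_lt hmem
      have hkey := deriv_lower_bound (fun s => eval (fun k => y k + s * d k) (g i)) _
        (1/2) T hT0 hder hlow
      have h0 : eval (fun k => y k + 0 * d k) (g i) = eval (fun k => y k) (g i) := by
        norm_num
      have hkey' : eval (fun k => y k + 0 * d k) (g i) + 1/2 * T
          ≤ eval (fun k => y k + T * d k) (g i) := hkey
      have hneg := neg_Gfun_le g y i
      show 0 ≤ eval (fun k => (y + T • d) k) (g i)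
      rw [hcoord T]
      rw [h0] at hkey'
      rw [hT] at hkey'
      linarith
    · have hmem := (hUmem _ (hball (hseg T (right_mem_Icc.2 hT0))) i).2 h
      exact le_of_lt hmem
  have hdist : dist y (y + T • d) = T * ‖d‖ := by
    rw [dist_self_add_right, norm_smul, Real.norm_eq_abs, abs_of_nonneg hT0]
  calc infDist y (Sg g) ≤ dist y (y + T • d) := infDist_le_dist_of_mem hzS
    _ = T * ‖d‖ := hdist
    _ ≤ (2 * ‖d‖ + 1) * Gfun g y := by rw [hT]; nlinarith

/-- Under the Constraint Qualification Condition at every point of `S(g)`,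
the Łojasiewicz exponent can be taken to be `1` (Theorem `thm::L_equal_1`). -/
theorem lojasiewicz_exponent_one {n r : ℕ} (g : Fin r → MvPoly n)
    (hS : (Sg g).Nonempty) (hSbox : Sg g ⊆ Box n)
    (hCQC : ∀ x ∈ Sg g, CQC g x) :
    ∃ 𝔠 : ℝ, 0 < 𝔠 ∧ ∀ y ∈ Box n, infDist y (Sg g) ≤ 𝔠 * Gfun g y := by
  classical
  choose c hcpos δ hδpos hloc using fun x (hx : x ∈ Sg g) => local_bound g x hx (hCQC x hx)
  set Δ : EuclideanSpace ℝ (Fin n) → ℝ :=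
    fun x => if hx : x ∈ Sg g then δ x hx else 1 with hΔ
  set Cf : EuclideanSpace ℝ (Fin n) → ℝ :=
    fun x => if hx : x ∈ Sg g then c x hx else 0 with hCf
  have hSclosed : IsClosed (Sg g) := by
    have : Sg g = ⋂ i, {y : EuclideanSpace ℝ (Fin n) | 0 ≤ eval (fun j => y j) (g i)} := by
      ext y; simp [Sg, mem_iInter]
    rw [this]
    exact isClosed_iInter fun i => isClosed_le continuous_const (evalCont _)
  have hBoxclosed : IsClosed (Box n) := by
    have : Box n = ⋂ i, {y : EuclideanSpace ℝ (Fin n) | |y i| ≤ 1} := by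
      ext y; simp [Box, mem_iInter]
    rw [this]
    refine isClosed_iInter fun i => isClosed_le ?_ continuous_const
    exact ((continuous_apply i).comp (PiLp.continuous_ofLp _ _)).abs
  have hBoxsub : Box n ⊆ closedBall 0 (Real.sqrt n) := by
    intro y hy
    rw [mem_closedBall, dist_zero_right, EuclideanSpace.norm_eq]
    have hsum : (∑ i, ‖y i‖ ^ 2) ≤ (n : ℝ) := by
      calc (∑ i, ‖y i‖ ^ 2) ≤ ∑ _i : Fin n, (1:ℝ) := by
            refine Finset.sum_le_sum fun i _ => ?_
            have := hy i
            rw [Real.norm_eq_abs]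
            nlinarith [abs_nonneg (y i)]
        _ = (n : ℝ) := by simp
    exact Real.sqrt_le_sqrt hsum
  have hBoxcomp : IsCompact (Box n) :=
    (isCompact_closedBall _ _).of_isClosed_subset hBoxclosed hBoxsub
  have hScomp : IsCompact (Sg g) := hBoxcomp.of_isClosed_subset hSclosed hSbox
  have hΔpos : ∀ x, 0 < Δ x := by
    intro x
    by_cases hx : x ∈ Sg g
    · simp only [hΔ, dif_pos hx]; exact hδpos x hx
    · simp only [hΔ, dif_neg hx]; norm_num
  obtain ⟨t, hts, htcover⟩ := hScomp.elim_nhds_subcover (fun x => ball x (Δ x))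
    (fun x _ => ball_mem_nhds x (hΔpos x))
  set V : Set (EuclideanSpace ℝ (Fin n)) := ⋃ x ∈ t, ball x (Δ x) with hV
  have hVopen : IsOpen V := isOpen_biUnion fun x _ => isOpen_ball
  set c₁ : ℝ := 1 + ∑ x ∈ t, Cf x with hc₁
  have hCfnn : ∀ x ∈ t, 0 ≤ Cf x := by
    intro x hx
    by_cases hxS : x ∈ Sg g
    · simp only [hCf, dif_pos hxS]; exact le_of_lt (hcpos x hxS)
    · simp only [hCf, dif_neg hxS]; exact le_refl 0
  have hc₁1 : (1:ℝ) ≤ c₁ := by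
    rw [hc₁]
    have := Finset.sum_nonneg hCfnn
    linarith
  have hc₁x : ∀ x ∈ t, Cf x ≤ c₁ := by
    intro x hx
    rw [hc₁]
    have := Finset.single_le_sum hCfnn hx
    linarith
  have hVbound : ∀ y ∈ V, infDist y (Sg g) ≤ c₁ * Gfun g y := by
    intro y hy
    rw [hV, mem_iUnion₂] at hy
    obtain ⟨x, hxt, hxy⟩ := hy
    have hxS : x ∈ Sg g := hts x hxt
    have hΔx : Δ x = δ x hxS := by simp only [hΔ, dif_pos hxS]
    have hCfx : Cf x = c x hxS := by simp only [hCf, dif_pos hxS]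
    have h1 := hloc x hxS y (by rw [← hΔx]; exact mem_ball.mp hxy)
    calc infDist y (Sg g) ≤ c x hxS * Gfun g y := h1
      _ ≤ c₁ * Gfun g y := by
          have h2 : c x hxS ≤ c₁ := by rw [← hCfx]; exact hc₁x x hxt
          nlinarith [Gfun_nonneg g y]
  obtain ⟨x₀, hx₀⟩ := hS
  have hdistB : ∀ y ∈ Box n, infDist y (Sg g) ≤ 2 * Real.sqrt n := by
    intro y hy
    have h1 : ‖y‖ ≤ Real.sqrt n := by
      have := hBoxsub hy; rw [mem_closedBall, dist_zero_right] at this; exact this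
    have h2 : ‖x₀‖ ≤ Real.sqrt n := by
      have := hBoxsub (hSbox hx₀); rw [mem_closedBall, dist_zero_right] at this; exact this
    calc infDist y (Sg g) ≤ dist y x₀ := infDist_le_dist_of_mem hx₀
      _ = ‖y - x₀‖ := dist_eq_norm _ _
      _ ≤ ‖y‖ + ‖x₀‖ := norm_sub_le _ _
      _ ≤ 2 * Real.sqrt n := by linarith
  rcases eq_empty_or_nonempty (Box n \ V) with hK | hK
  · refine ⟨c₁, by linarith, fun y hy => ?_⟩
    have hyV : y ∈ V := by
      by_contra hyV
      exact (eq_empty_iff_forall_notMem.mp hK y) ⟨hy, hyV⟩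
    exact hVbound y hyV
  · have hKcomp : IsCompact (Box n \ V) := hBoxcomp.diff hVopen
    obtain ⟨w, hwK, hwmin⟩ := hKcomp.exists_isMinOn hK (Gfun_continuous g).continuousOn
    set m : ℝ := Gfun g w with hm
    have hmpos : 0 < m := by
      rcases lt_or_eq_of_le (Gfun_nonneg g w) with h | h
      · exact h
      · exfalso
        have hwS : w ∈ Sg g := mem_Sg_of_Gfun_eq_zero g w h.symm
        have : w ∈ V := htcover hwS
        exact hwK.2 this
    set D : ℝ := 2 * Real.sqrt n + 1 with hD
    have hDpos : 0 < D := by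
      have := Real.sqrt_nonneg (n : ℝ); rw [hD]; linarith
    refine ⟨max c₁ (D / m), lt_of_lt_of_le (by linarith) (le_max_left _ _), fun y hy => ?_⟩
    by_cases hyV : y ∈ V
    · calc infDist y (Sg g) ≤ c₁ * Gfun g y := hVbound y hyV
        _ ≤ max c₁ (D / m) * Gfun g y := by
            nlinarith [Gfun_nonneg g y, le_max_left c₁ (D / m)]
    · have hyK : y ∈ Box n \ V := ⟨hy, hyV⟩
      have hmy : m ≤ Gfun g y := hwmin hyK
      have hDm : 0 ≤ D / m := le_of_lt (div_pos hDpos hmpos)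
      calc infDist y (Sg g) ≤ 2 * Real.sqrt n := hdistB y hy
        _ ≤ D := by rw [hD]; linarith
        _ = (D / m) * m := (div_mul_cancel₀ _ (ne_of_gt hmpos)).symm
        _ ≤ (D / m) * Gfun g y := by nlinarith
        _ ≤ max c₁ (D / m) * Gfun g y := by
            nlinarith [Gfun_nonneg g y, le_max_right c₁ (D / m)]

end
end

section
/- Let g = (g₁,…,g_r) be polynomials in ℝ[X₁,…,X_n] with S = S(g) nonempty and contained in [−1,1]ⁿ, and let f be a polynomial of degree d ≥ 1 with f* = min_{x∈S} f(x) > 0. Let A = {x ∈ [−1,1]ⁿ : f(x) ≤ (3/4)f*}. Then for every x ∈ A and every y ∈ S, the Euclidean distance satisfies ‖x − y‖₂ ≥ ε(f)/(8d²). -/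
open MvPolynomial Metric Set

noncomputable section

section MarkovAux

open Polynomial Polynomial.Chebyshev Real

lemma U_eval_one_aux : ∀ m : ℕ, ((Polynomial.Chebyshev.U ℝ (m:ℤ)).eval 1 = m + 1 ∧
    (Polynomial.Chebyshev.U ℝ ((m:ℤ)+1)).eval 1 = (m:ℝ) + 2) := by
  intro m
  induction m with
  | zero => simp [Polynomial.Chebyshev.U_zero, Polynomial.Chebyshev.U_one]
  | succ k ih =>
    obtain ⟨h1, h2⟩ := ih
    constructor
    · have : ((k:ℤ)+1) = ((k+1:ℕ):ℤ) := by push_cast; ring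
      rw [← this, h2]; push_cast; ring
    · have hrec := Polynomial.Chebyshev.U_add_two ℝ (k:ℤ)
      have : ((k+1:ℕ):ℤ) + 1 = (k:ℤ) + 2 := by push_cast; ring
      rw [this, hrec]
      simp only [Polynomial.eval_sub, Polynomial.eval_mul, Polynomial.eval_ofNat,
        Polynomial.eval_X]
      rw [h1]
      have : ((k:ℤ)+1) = ((k:ℤ)+1) := rfl
      rw [h2]
      push_cast; ring

lemma U_eval_one (m : ℕ) : (Polynomial.Chebyshev.U ℝ (m:ℤ)).eval 1 = m + 1 :=
  (U_eval_one_aux m).1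

lemma T_deriv_eval_one (m : ℕ) (hm : 1 ≤ m) :
    (Polynomial.derivative (Polynomial.Chebyshev.T ℝ (m:ℤ))).eval 1 = (m:ℝ)^2 := by
  rw [Polynomial.Chebyshev.T_derivative_eq_U]
  have h1 : ((m:ℤ) - 1) = ((m-1:ℕ):ℤ) := by omega
  rw [h1]
  simp only [Polynomial.eval_mul, Polynomial.eval_intCast]
  rw [_root_.U_eval_one]
  have : ((m-1:ℕ):ℝ) = (m:ℝ) - 1 := by
    have : (1:ℕ) ≤ m := hm
    push_cast [this]; ring
  rw [this]
  push_cast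
  ring

lemma natDegree_T_le_aux : ∀ m : ℕ, ((Polynomial.Chebyshev.T ℝ (m:ℤ)).natDegree ≤ m ∧
    (Polynomial.Chebyshev.T ℝ ((m:ℤ)+1)).natDegree ≤ m + 1) := by
  intro m
  induction m with
  | zero => constructor
            · simp [Polynomial.Chebyshev.T_zero]
            · simp [Polynomial.Chebyshev.T_one, Polynomial.natDegree_X_le]
  | succ k ih =>
    obtain ⟨h1, h2⟩ := ih
    constructor
    · have : ((k+1:ℕ):ℤ) = (k:ℤ) + 1 := by push_cast; ring
      rw [this]; exact h2
    · have : ((k+1:ℕ):ℤ) + 1 = (k:ℤ) + 2 := by push_cast; ring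
      rw [this, Polynomial.Chebyshev.T_add_two]
      refine le_trans (Polynomial.natDegree_sub_le _ _) ?_
      rw [max_le_iff]
      constructor
      · refine le_trans (Polynomial.natDegree_mul_le) ?_
        have hh : (2 * Polynomial.X : Polynomial ℝ).natDegree ≤ 1 := by
          refine le_trans (Polynomial.natDegree_mul_le) ?_
          simp [Polynomial.natDegree_X_le]
        omega
      · exact le_trans h1 (by omega)

lemma natDegree_T_le (m : ℕ) : (Polynomial.Chebyshev.T ℝ (m:ℤ)).natDegree ≤ m := (natDegree_T_le_aux m).1


lemma markov_one_sided (d : ℕ) (hd : 1 ≤ d) (M : ℝ) (p : Polynomial ℝ)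
    (hdeg : p.natDegree ≤ d)
    (hM : ∀ t : ℝ, |t| ≤ 1 → |p.eval t| ≤ M) :
    p.derivative.eval 1 ≤ (d:ℝ)^2 * M := by
  by_contra hgt
  push_neg at hgt
  have hM0 : 0 ≤ M := le_trans (abs_nonneg _) (hM 1 (by norm_num))
  have hdR : (1:ℝ) ≤ (d:ℝ) := by exact_mod_cast hd
  have hd2pos : (0:ℝ) < (d:ℝ)^2 := by positivity
  have hdpos : (0:ℝ) < (d:ℝ) := by linarith
  set c : ℝ := p.derivative.eval 1 / (d:ℝ)^2 with hc
  have hcM : M < c := by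
    rw [hc, lt_div_iff₀ hd2pos]; nlinarith
  have hc0 : 0 ≤ c := le_trans hM0 hcM.le
  set r : Polynomial ℝ := Polynomial.C c * Polynomial.Chebyshev.T ℝ (d:ℤ) - p with hr
  -- value of r'(1)
  have hr'1 : r.derivative.eval 1 = 0 := by
    rw [hr]
    simp only [Polynomial.derivative_sub, Polynomial.derivative_mul, Polynomial.derivative_C,
      zero_mul, zero_add, Polynomial.eval_sub, Polynomial.eval_mul, Polynomial.eval_C]
    rw [T_deriv_eval_one d hd, hc]
    field_simp
    ring
  -- the alternation points
  set η : ℕ → ℝ := fun k => Real.cos (k * π / d) with hη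
  have hηabs : ∀ k : ℕ, |η k| ≤ 1 := fun k => Real.abs_cos_le_one _
  have hTval : ∀ k : ℕ, (Polynomial.Chebyshev.T ℝ (d:ℤ)).eval (η k) = (-1)^k := by
    intro k
    rw [hη]
    have := Polynomial.Chebyshev.T_real_cos ((k:ℝ) * π / d) (d:ℤ)
    rw [this]
    have harg : ((d:ℤ):ℝ) * ((k:ℝ) * π / d) = (k:ℝ) * π := by
      push_cast
      field_simp
    rw [harg]
    have := Real.cos_nat_mul_pi_sub 0 k
    simpa using this
  have hrval : ∀ k : ℕ, r.eval (η k) = c * (-1)^k - p.eval (η k) := by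
    intro k
    rw [hr]
    simp [hTval k]
  have hrpos : ∀ k : ℕ, Even k → 0 < r.eval (η k) := by
    intro k hk
    rw [hrval k, hk.neg_one_pow]
    have := abs_le.1 (hM (η k) (hηabs k))
    linarith [this.2]
  have hrneg : ∀ k : ℕ, Odd k → r.eval (η k) < 0 := by
    intro k hk
    rw [hrval k, hk.neg_one_pow]
    have := abs_le.1 (hM (η k) (hηabs k))
    linarith [this.1]
  have hπpos := Real.pi_pos
  have hηanti : ∀ j k : ℕ, j < k → k ≤ d → η k < η j := by
    intro j k hjk hkd
    apply Real.strictAntiOn_cos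
    · constructor
      · positivity
      · rw [div_le_iff₀ hdpos]
        have : (j:ℝ) ≤ (d:ℝ) := by exact_mod_cast le_trans (le_of_lt hjk) hkd
        nlinarith
    · constructor
      · positivity
      · rw [div_le_iff₀ hdpos]
        have : (k:ℝ) ≤ (d:ℝ) := by exact_mod_cast hkd
        nlinarith
    · have hjkR : (j:ℝ) < (k:ℝ) := by exact_mod_cast hjk
      have hlt : (j:ℝ) * π < (k:ℝ) * π := by nlinarith
      exact (div_lt_div_iff_of_pos_right hdpos).2 hlt
  -- roots of r between alternation points
  have hIVT : ∀ k : ℕ, ∃ x : ℝ, k < d → (x ∈ Set.Ioo (η (k+1)) (η k) ∧ r.eval x = 0) := by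
    intro k
    by_cases hk : k < d
    · have hlt : η (k+1) < η k := hηanti k (k+1) (by omega) (by omega)
      have hcont : ContinuousOn (fun x => r.eval x) (Set.Icc (η (k+1)) (η k)) :=
        r.continuous.continuousOn
      rcases Nat.even_or_odd k with he | ho
      · have h1 : r.eval (η (k+1)) < 0 := hrneg _ (Even.add_one he)
        have h2 : 0 < r.eval (η k) := hrpos _ he
        have hmem : (0:ℝ) ∈ Set.Ioo (r.eval (η (k+1))) (r.eval (η k)) := ⟨h1, h2⟩
        obtain ⟨x, hx, hx0⟩ := intermediate_value_Ioo (le_of_lt hlt) hcont hmem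
        exact ⟨x, fun _ => ⟨hx, hx0⟩⟩
      · have h1 : 0 < r.eval (η (k+1)) := hrpos _ (Odd.add_one ho)
        have h2 : r.eval (η k) < 0 := hrneg _ ho
        have hmem : (0:ℝ) ∈ Set.Ioo (r.eval (η k)) (r.eval (η (k+1))) := ⟨h2, h1⟩
        obtain ⟨x, hx, hx0⟩ := intermediate_value_Ioo' (le_of_lt hlt) hcont hmem
        exact ⟨x, fun _ => ⟨hx, hx0⟩⟩
    · exact ⟨0, fun h => absurd h hk⟩
  choose ξ hξ using hIVT
  have hξmem : ∀ k, k < d → ξ k ∈ Set.Ioo (η (k+1)) (η k) := fun k hk => (hξ k hk).1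
  have hξ0 : ∀ k, k < d → r.eval (ξ k) = 0 := fun k hk => (hξ k hk).2
  have hξanti : ∀ j k, j < k → k < d → ξ k < ξ j := by
    intro j k hjk hkd
    have h1 : ξ k < η k := (hξmem k hkd).2
    have h3 : η (j+1) < ξ j := (hξmem j (lt_trans hjk hkd)).1
    have h2 : η k ≤ η (j+1) := by
      rcases Nat.lt_or_ge (j+1) k with h | h
      · exact (hηanti (j+1) k h (le_of_lt hkd)).le
      · have hkj : k = j+1 := by omega
        rw [hkj]
    linarith
  have hηle1 : ∀ k : ℕ, η k ≤ 1 := by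
    intro k
    have := Real.cos_le_one ((k:ℝ) * π / d)
    simpa [hη] using this
  have hξlt1 : ∀ k, k < d → ξ k < 1 := by
    intro k hk
    exact lt_of_lt_of_le (hξmem k hk).2 (hηle1 k)
  -- Rolle between consecutive roots
  have hRolle : ∀ k : ℕ, ∃ x : ℝ, k + 1 < d →
      (x ∈ Set.Ioo (ξ (k+1)) (ξ k) ∧ r.derivative.eval x = 0) := by
    intro k
    by_cases hk : k + 1 < d
    · have hlt : ξ (k+1) < ξ k := hξanti k (k+1) (by omega) hk
      have hcont : ContinuousOn (fun x => r.eval x) (Set.Icc (ξ (k+1)) (ξ k)) :=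
        r.continuous.continuousOn
      have heq : r.eval (ξ (k+1)) = r.eval (ξ k) := by
        rw [hξ0 _ hk, hξ0 _ (by omega)]
      obtain ⟨x, hx, hx0⟩ := exists_deriv_eq_zero hlt hcont heq
      refine ⟨x, fun _ => ⟨hx, ?_⟩⟩
      rw [← Polynomial.deriv]
      exact hx0
    · exact ⟨0, fun h => absurd h hk⟩
  choose ζ hζ using hRolle
  have hζmem : ∀ k, k+1 < d → ζ k ∈ Set.Ioo (ξ (k+1)) (ξ k) := fun k hk => (hζ k hk).1
  have hζanti : ∀ j k, j < k → k+1 < d → ζ k < ζ j := by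
    intro j k hjk hkd
    have h1 : ζ k < ξ k := (hζmem k hkd).2
    have h3 : ξ (j+1) < ζ j := (hζmem j (by omega)).1
    have h2 : ξ k ≤ ξ (j+1) := by
      rcases Nat.lt_or_ge (j+1) k with h | h
      · exact (hξanti (j+1) k h (by omega)).le
      · have hkj : k = j+1 := by omega
        rw [hkj]
    linarith
  have hζlt1 : ∀ k, k+1 < d → ζ k < 1 := by
    intro k hk
    exact lt_trans (hζmem k hk).2 (hξlt1 k (by omega))
  -- the derivative is a nonzero polynomial
  have hr'ne : r.derivative ≠ 0 := by
    intro h0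
    have hconst : r = Polynomial.C (r.coeff 0) := Polynomial.eq_C_of_derivative_eq_zero h0
    have he0 := hrpos 0 Even.zero
    have he1 := hrneg 1 odd_one
    rw [hconst] at he0 he1
    simp at he0 he1
    linarith
  -- counting roots
  classical
  have hcard : d ≤ r.derivative.natDegree := by
    set F : Finset ℝ := insert (1:ℝ) ((Finset.range (d-1)).image ζ) with hF
    have himage_inj : Set.InjOn ζ ((Finset.range (d-1) : Finset ℕ) : Set ℕ) := by
      intro a ha b hb hab
      simp only [Finset.coe_range, Set.mem_Iio] at ha hb
      by_contra hne
      rcases lt_trichotomy a b with h | h | h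
      · have := hζanti a b h (by omega); linarith [le_of_eq hab]
      · exact hne h
      · have := hζanti b a h (by omega); linarith
    have h1notmem : (1:ℝ) ∉ (Finset.range (d-1)).image ζ := by
      intro hmem
      obtain ⟨k, hk, hk1⟩ := Finset.mem_image.1 hmem
      rw [Finset.mem_range] at hk
      have := hζlt1 k (by omega)
      rw [hk1] at this
      exact lt_irrefl _ this
    have hFcard : F.card = d := by
      rw [hF, Finset.card_insert_of_notMem h1notmem,
        Finset.card_image_of_injOn himage_inj, Finset.card_range]
      omega
    have hsub : F ⊆ r.derivative.roots.toFinset := by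
      intro x hx
      rw [Multiset.mem_toFinset, Polynomial.mem_roots hr'ne]
      rw [hF] at hx
      rcases Finset.mem_insert.1 hx with h | h
      · rw [h]; exact hr'1
      · obtain ⟨k, hk, hkx⟩ := Finset.mem_image.1 h
        rw [Finset.mem_range] at hk
        rw [← hkx]
        exact (hζ k (by omega)).2
    calc d = F.card := hFcard.symm
      _ ≤ r.derivative.roots.toFinset.card := Finset.card_le_card hsub
      _ ≤ Multiset.card r.derivative.roots := r.derivative.roots.toFinset_card_le
      _ ≤ r.derivative.natDegree := Polynomial.card_roots' _
  have hdeg' : r.derivative.natDegree ≤ d - 1 := by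
    have h1 : r.natDegree ≤ d := by
      rw [hr]
      refine le_trans (Polynomial.natDegree_sub_le _ _) ?_
      rw [max_le_iff]
      refine ⟨le_trans (Polynomial.natDegree_mul_le) ?_, hdeg⟩
      simpa using natDegree_T_le d
    exact le_trans (Polynomial.natDegree_derivative_le r) (by omega)
  omega

lemma markov_at_one (d : ℕ) (hd : 1 ≤ d) (M : ℝ) (p : Polynomial ℝ)
    (hdeg : p.natDegree ≤ d)
    (hM : ∀ t : ℝ, |t| ≤ 1 → |p.eval t| ≤ M) :
    |p.derivative.eval 1| ≤ (d:ℝ)^2 * M := by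
  rw [abs_le]
  constructor
  · have h := markov_one_sided d hd M (-p) (by simpa using hdeg)
      (by intro t ht; simpa using hM t ht)
    simp only [Polynomial.derivative_neg, Polynomial.eval_neg] at h
    linarith
  · exact markov_one_sided d hd M p hdeg hM

open MvPolynomial

lemma eval_aeval_poly {n : ℕ} (f : MvPolynomial (Fin n) ℝ) (L : Fin n → Polynomial ℝ) (t : ℝ) :
    ((MvPolynomial.aeval L) f).eval t = MvPolynomial.eval (fun i => (L i).eval t) f := by
  induction f using MvPolynomial.induction_on with
  | C a => simp
  | add p q hp hq => simp [hp, hq]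
  | mul_X p j hp => simp [hp]

lemma derivative_aeval_affine {n : ℕ} (f : MvPolynomial (Fin n) ℝ) (c v : Fin n → ℝ) :
    Polynomial.derivative ((MvPolynomial.aeval
        (fun i => Polynomial.C (c i) + Polynomial.C (v i) * Polynomial.X)) f)
      = ∑ i, Polynomial.C (v i) *
          (MvPolynomial.aeval (fun i => Polynomial.C (c i) + Polynomial.C (v i) * Polynomial.X))
            (MvPolynomial.pderiv i f) := by
  classical
  set L : Fin n → Polynomial ℝ := fun i => Polynomial.C (c i) + Polynomial.C (v i) * Polynomial.X
    with hL
  induction f using MvPolynomial.induction_on with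
  | C a => simp
  | add p q hp hq =>
    simp only [map_add, Polynomial.derivative_add, hp, hq, mul_add, Finset.sum_add_distrib]
  | mul_X p j hp =>
    simp only [map_mul, MvPolynomial.aeval_X, Polynomial.derivative_mul, hp]
    have hLd : Polynomial.derivative (L j) = Polynomial.C (v j) := by
      simp [hL]
    rw [hLd]
    have hR : ∀ i : Fin n, Polynomial.C (v i) *
        (MvPolynomial.aeval L) (MvPolynomial.pderiv i (p * MvPolynomial.X j))
        = Polynomial.C (v i) * ((MvPolynomial.aeval L) (MvPolynomial.pderiv i p) * L j)
          + Polynomial.C (v i) * ((MvPolynomial.aeval L) p *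
              (MvPolynomial.aeval L) (MvPolynomial.pderiv i (MvPolynomial.X j : MvPolynomial (Fin n) ℝ))) := by
      intro i
      rw [MvPolynomial.pderiv_mul, map_add, map_mul, map_mul, MvPolynomial.aeval_X, mul_add]
    rw [Finset.sum_congr rfl (fun i _ => hR i), Finset.sum_add_distrib]
    congr 1
    · rw [Finset.sum_mul]
      exact Finset.sum_congr rfl (fun i _ => by ring)
    · rw [Finset.sum_eq_single j]
      · simp [MvPolynomial.pderiv_X_self]
        ring
      · intro b _ hbj
        rw [MvPolynomial.pderiv_X_of_ne (Ne.symm hbj)]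
        simp
      · intro h
        exact absurd (Finset.mem_univ j) h

lemma natDegree_aeval_le {n : ℕ} (f : MvPolynomial (Fin n) ℝ) (L : Fin n → Polynomial ℝ)
    (hL : ∀ i, (L i).natDegree ≤ 1) :
    ((MvPolynomial.aeval L) f).natDegree ≤ f.totalDegree := by
  rw [MvPolynomial.aeval_def, MvPolynomial.eval₂_eq]
  apply Polynomial.natDegree_sum_le_of_forall_le
  intro α hα
  refine le_trans Polynomial.natDegree_mul_le ?_
  have h1 : (algebraMap ℝ (Polynomial ℝ) (MvPolynomial.coeff α f)).natDegree = 0 := by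
    simp [Polynomial.algebraMap_apply]
  rw [h1, zero_add]
  refine le_trans (Polynomial.natDegree_prod_le _ _) ?_
  refine le_trans (Finset.sum_le_sum
    (fun i _ => le_trans (Polynomial.natDegree_pow_le)
      (Nat.mul_le_mul_left (α i) (hL i)))) ?_
  simp only [Nat.mul_one]
  exact MvPolynomial.le_totalDegree hα

lemma abs_eval_le_coeff_sum {n : ℕ} (f : MvPolynomial (Fin n) ℝ) (w : Fin n → ℝ)
    (hw : ∀ i, |w i| ≤ 1) :
    |MvPolynomial.eval w f| ≤ ∑ α ∈ f.support, |MvPolynomial.coeff α f| := by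
  rw [MvPolynomial.eval_eq]
  refine le_trans (Finset.abs_sum_le_sum_abs _ _) ?_
  apply Finset.sum_le_sum
  intro α hα
  rw [abs_mul]
  have h1 : |∏ i ∈ α.support, w i ^ α i| ≤ 1 := by
    rw [Finset.abs_prod]
    apply Finset.prod_le_one
    · intro i _; positivity
    · intro i _
      rw [abs_pow]
      exact pow_le_one₀ (abs_nonneg _) (hw i)
  nlinarith [abs_nonneg (MvPolynomial.coeff α f)]

lemma dirDeriv_bound {n : ℕ} (f : MvPolynomial (Fin n) ℝ) (hd : 1 ≤ f.totalDegree) (B : ℝ)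
    (hB : ∀ w : Fin n → ℝ, (∀ i, |w i| ≤ 1) → |MvPolynomial.eval w f| ≤ B)
    (z a : Fin n → ℝ) (hz : ∀ i, |z i| ≤ 1) (ha : ∀ i, |a i| ≤ 1) :
    |∑ i, ((z i - a i)/2) * MvPolynomial.eval z (MvPolynomial.pderiv i f)|
      ≤ (f.totalDegree : ℝ)^2 * B := by
  set c : Fin n → ℝ := fun i => (a i + z i)/2 with hc
  set v : Fin n → ℝ := fun i => (z i - a i)/2 with hv
  set L : Fin n → Polynomial ℝ :=
    fun i => Polynomial.C (c i) + Polynomial.C (v i) * Polynomial.X with hLdef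
  set q := (MvPolynomial.aeval L) f with hqdef
  have hLdeg : ∀ i, (L i).natDegree ≤ 1 := by
    intro i
    refine le_trans (Polynomial.natDegree_add_le _ _) ?_
    rw [max_le_iff]
    constructor
    · simp
    · refine le_trans Polynomial.natDegree_mul_le ?_
      simp
  have hqdeg : q.natDegree ≤ f.totalDegree := natDegree_aeval_le f L hLdeg
  have hqval : ∀ t : ℝ, |t| ≤ 1 → |q.eval t| ≤ B := by
    intro t ht
    rw [hqdef, eval_aeval_poly]
    apply hB
    intro i
    have hh : (L i).eval t = a i * ((1 - t)/2) + z i * ((1 + t)/2) := by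
      simp [hLdef, hc, hv]; ring
    rw [hh]
    have habs := abs_le.1 ht
    refine le_trans (abs_add_le _ _) ?_
    rw [abs_mul, abs_mul]
    have h2 : |(1 - t)/2| = (1-t)/2 := abs_of_nonneg (by linarith [habs.2])
    have h3 : |(1 + t)/2| = (1+t)/2 := abs_of_nonneg (by linarith [habs.1])
    rw [h2, h3]
    nlinarith [ha i, hz i, abs_nonneg (a i), abs_nonneg (z i), habs.1, habs.2]
  have hder := markov_at_one f.totalDegree hd B q hqdeg hqval
  have hq1 : q.derivative.eval 1
      = ∑ i, ((z i - a i)/2) * MvPolynomial.eval z (MvPolynomial.pderiv i f) := by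
    rw [hqdef, hLdef, derivative_aeval_affine f c v, Polynomial.eval_finset_sum]
    apply Finset.sum_congr rfl
    intro i _
    rw [Polynomial.eval_mul, Polynomial.eval_C, eval_aeval_poly]
    have harg : (fun j => (Polynomial.C (c j) + Polynomial.C (v j) * Polynomial.X).eval (1:ℝ))
        = z := by
      funext j
      simp [hc, hv]
      ring
    rw [harg]
  rw [← hq1]
  exact hder

lemma key_lipschitz {n : ℕ} (f : MvPolynomial (Fin n) ℝ) (hd : 1 ≤ f.totalDegree) (B : ℝ)
    (hB : ∀ w : Fin n → ℝ, (∀ i, |w i| ≤ 1) → |MvPolynomial.eval w f| ≤ B)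
    (x y : Fin n → ℝ) (hx : ∀ i, |x i| ≤ 1) (hy : ∀ i, |y i| ≤ 1)
    (s : ℝ) (hs0 : 0 < s) (hsc : ∀ i, |y i - x i| ≤ s) :
    MvPolynomial.eval y f - MvPolynomial.eval x f ≤ 2 * (f.totalDegree : ℝ)^2 * B * s := by
  set v : Fin n → ℝ := fun i => y i - x i with hv
  set L : Fin n → Polynomial ℝ :=
    fun i => Polynomial.C (x i) + Polynomial.C (v i) * Polynomial.X with hLdef
  set g := (MvPolynomial.aeval L) f with hgdef
  have hG : ∀ t : ℝ, g.eval t = MvPolynomial.eval (fun i => x i + v i * t) f := by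
    intro t
    rw [hgdef, eval_aeval_poly]
    have hfun : (fun i => Polynomial.eval t (L i)) = fun i => x i + v i * t := by
      funext i
      simp [hLdef]
    rw [hfun]
  have h0 : g.eval 0 = MvPolynomial.eval x f := by
    have hfun : (fun i => x i + v i * 0) = x := by funext i; ring
    rw [hG, hfun]
  have h1 : g.eval 1 = MvPolynomial.eval y f := by
    have hfun : (fun i => x i + v i * 1) = y := by funext i; simp [hv]
    rw [hG, hfun]
  have hcont : ContinuousOn (fun t : ℝ => g.eval t) (Set.Icc 0 1) := g.continuous.continuousOn
  have hdiff : DifferentiableOn ℝ (fun t : ℝ => g.eval t) (Set.Ioo 0 1) :=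
    g.differentiable.differentiableOn
  obtain ⟨t₀, ht₀, hslope⟩ :=
    exists_deriv_eq_slope (fun t => g.eval t) (by norm_num : (0:ℝ) < 1) hcont hdiff
  have hderiv : deriv (fun t => g.eval t) t₀ = g.derivative.eval t₀ := Polynomial.deriv g
  set z : Fin n → ℝ := fun i => x i + v i * t₀ with hz
  have hg't : g.derivative.eval t₀
      = ∑ i, v i * MvPolynomial.eval z (MvPolynomial.pderiv i f) := by
    rw [hgdef, hLdef, derivative_aeval_affine f x v, Polynomial.eval_finset_sum]
    apply Finset.sum_congr rfl
    intro i _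
    rw [Polynomial.eval_mul, Polynomial.eval_C, eval_aeval_poly]
    have harg : (fun j => (Polynomial.C (x j) + Polynomial.C (v j) * Polynomial.X).eval t₀)
        = z := by
      funext j
      simp [hz]
    rw [harg]
  have hzbox : ∀ i, |z i| ≤ 1 := by
    intro i
    have hzi : z i = x i * (1 - t₀) + y i * t₀ := by rw [hz]; simp [hv]; ring
    rw [hzi]
    refine le_trans (abs_add_le _ _) ?_
    rw [abs_mul, abs_mul, abs_of_nonneg (by linarith [ht₀.2] : (0:ℝ) ≤ 1 - t₀),
      abs_of_nonneg (by linarith [ht₀.1] : (0:ℝ) ≤ t₀)]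
    nlinarith [hx i, hy i, abs_nonneg (x i), abs_nonneg (y i), ht₀.1, ht₀.2]
  set a : Fin n → ℝ := fun i => v i / s with ha
  have haa : ∀ i, |a i| ≤ 1 := by
    intro i
    rw [ha]
    rw [abs_div, abs_of_pos hs0, div_le_one hs0]
    exact hsc i
  set b : Fin n → ℝ := fun i => -(a i) with hb
  have hbb : ∀ i, |b i| ≤ 1 := by
    intro i
    rw [hb]
    simpa using haa i
  have hsplit : ∑ i, v i * MvPolynomial.eval z (MvPolynomial.pderiv i f)
      = s * ((∑ i, ((z i - b i)/2) * MvPolynomial.eval z (MvPolynomial.pderiv i f))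
            - (∑ i, ((z i - a i)/2) * MvPolynomial.eval z (MvPolynomial.pderiv i f))) := by
    rw [← Finset.sum_sub_distrib, Finset.mul_sum]
    apply Finset.sum_congr rfl
    intro i _
    have hvi : v i = s * a i := by
      rw [ha]
      field_simp
    rw [hvi, hb]
    ring
  have hb1 := dirDeriv_bound f hd B hB z b hzbox hbb
  have hb2 := dirDeriv_bound f hd B hB z a hzbox haa
  have habs1 := abs_le.1 hb1
  have habs2 := abs_le.1 hb2
  have heq : MvPolynomial.eval y f - MvPolynomial.eval x f
      = s * ((∑ i, ((z i - b i)/2) * MvPolynomial.eval z (MvPolynomial.pderiv i f))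
            - (∑ i, ((z i - a i)/2) * MvPolynomial.eval z (MvPolynomial.pderiv i f))) := by
    rw [← hsplit, ← hg't, ← hderiv, hslope, h0, h1]
    ring
  rw [heq]
  nlinarith [habs1.1, habs1.2, habs2.1, habs2.2, hs0]

end MarkovAux

/-- lower bound on the distance between the sublevel set
`A = {x ∈ [-1,1]ⁿ : f(x) ≤ (3/4) f*}` and `S(g)` (Proposition `prop::distance_bound`). -/
theorem distance_bound {n r : ℕ} (g : Fin r → MvPoly n)
    (hS : (Sg g).Nonempty) (hSbox : Sg g ⊆ Box n)
    (f : MvPoly n) (hd : 1 ≤ f.totalDegree) (fstar : ℝ)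
    (hmin : ∀ x ∈ Sg g, fstar ≤ eval (fun j => x j) f)
    (hatt : ∃ x ∈ Sg g, eval (fun j => x j) f = fstar)
    (hpos : 0 < fstar) :
    ∀ x ∈ Box n, eval (fun j => x j) f ≤ 3 / 4 * fstar →
      ∀ y ∈ Sg g,
        (fstar / boxNorm f) / (8 * (f.totalDegree : ℝ) ^ 2) ≤ dist x y := by
  intro x hx hxA y hy
  have hdR : (1:ℝ) ≤ (f.totalDegree : ℝ) := by exact_mod_cast hd
  set B := boxNorm f with hBdef
  have hbdd : BddAbove ((fun x : EuclideanSpace ℝ (Fin n) => |eval (fun j => x j) f|) '' Box n) := by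
    refine ⟨∑ α ∈ f.support, |MvPolynomial.coeff α f|, ?_⟩
    rintro t ⟨w, hw, rfl⟩
    exact abs_eval_le_coeff_sum f (fun j => w j) hw
  have hBmem : ∀ w : EuclideanSpace ℝ (Fin n), w ∈ Box n → |eval (fun j => w j) f| ≤ B := by
    intro w hw
    apply le_csSup hbdd
    exact ⟨w, hw, rfl⟩
  have hBf : ∀ w : Fin n → ℝ, (∀ i, |w i| ≤ 1) → |MvPolynomial.eval w f| ≤ B := by
    intro w hw
    exact hBmem (WithLp.toLp 2 w) hw
  have hyBox : y ∈ Box n := hSbox hy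
  have hfy : fstar ≤ eval (fun j => y j) f := hmin y hy
  obtain ⟨x₀, hx₀S, hx₀⟩ := hatt
  have hfstarB : fstar ≤ B := by
    have h := hBmem x₀ (hSbox hx₀S)
    rw [hx₀] at h
    calc fstar = |fstar| := (abs_of_pos hpos).symm
      _ ≤ B := h
  have hBpos : 0 < B := lt_of_lt_of_le hpos hfstarB
  have hs0 : 0 < dist x y := by
    rcases eq_or_lt_of_le (dist_nonneg : (0:ℝ) ≤ dist x y) with h | h
    · exfalso
      have hxy : x = y := dist_eq_zero.1 h.symm
      rw [hxy] at hxA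
      linarith
    · exact h
  have hcoord : ∀ i, |y i - x i| ≤ dist x y := by
    intro i
    have h1 : |y i - x i| = dist (x i) (y i) := by
      rw [Real.dist_eq, abs_sub_comm]
    rw [h1, EuclideanSpace.dist_eq]
    have h2 : dist (x i) (y i) = Real.sqrt ((dist (x i) (y i))^2) :=
      (Real.sqrt_sq dist_nonneg).symm
    rw [h2]
    apply Real.sqrt_le_sqrt
    exact Finset.single_le_sum (f := fun j => dist (x j) (y j)^2) (fun j _ => sq_nonneg _) (Finset.mem_univ i)
  have hlip := key_lipschitz f hd B hBf (fun j => x j) (fun j => y j) hx hyBox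
    (dist x y) hs0 hcoord
  have hgap : fstar / 4 ≤ MvPolynomial.eval (fun j => y j) f
      - MvPolynomial.eval (fun j => x j) f := by
    linarith
  have hfinal : fstar ≤ 8 * (f.totalDegree : ℝ)^2 * B * dist x y := by
    linarith
  rw [div_div, div_le_iff₀ (by positivity)]
  nlinarith [hfinal]

end
end

section
/- Let g = (g₁,…,g_r) be polynomials in ℝ[X₁,…,X_n], let y ∈ ℝⁿ \ S(g), and let z ∈ S(g) be a point minimizing the Euclidean distance from y to S(g), i.e. ‖y − z‖₂ = dist(y, S(g)). Let I = {i : gᵢ(z) = 0} be the indices of the active constraints at z, and assume the gradients {∇gᵢ(z) : i ∈ I} are linearly independent. Then there exist reals λᵢ ≥ 0 for i ∈ I such that y − z = Σ_{i∈I} λᵢ · ∇(−gᵢ)(z). -/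
open MvPolynomial Metric Set
open scoped RealInnerProductSpace

noncomputable section

lemma hasStrictFDerivAt_eval_pi {n : ℕ} (p : MvPoly n) (x : Fin n → ℝ) :
    HasStrictFDerivAt (fun w : Fin n → ℝ => eval w p)
      (∑ j, eval x (pderiv j p) • ContinuousLinearMap.proj (R := ℝ) (φ := fun _ : Fin n => ℝ) j) x := by
  induction p using MvPolynomial.induction_on with
  | C a =>
      simp only [eval_C, pderiv_C, map_zero, zero_smul, Finset.sum_const_zero]
      exact hasStrictFDerivAt_const a x
  | add p q hp hq =>
      have := hp.add hq
      simp only [eval_add] at this ⊢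
      refine this.congr_fderiv (Eq.symm ?_)
      simp [map_add, add_smul, Finset.sum_add_distrib]
  | mul_X p j hp =>
      have hX : HasStrictFDerivAt (fun w : Fin n → ℝ => w j)
          (ContinuousLinearMap.proj (R := ℝ) (φ := fun _ : Fin n => ℝ) j) x := by
        exact (ContinuousLinearMap.proj (R := ℝ) (φ := fun _ : Fin n => ℝ) j).hasStrictFDerivAt
      have hmul := hp.mul hX
      simp only [eval_mul, eval_X] at hmul ⊢
      refine hmul.congr_fderiv (Eq.symm ?_)
      ext w
      simp only [ContinuousLinearMap.coe_sum', Finset.sum_apply, ContinuousLinearMap.coe_smul',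
        Pi.smul_apply, ContinuousLinearMap.proj_apply, smul_eq_mul, pderiv_mul, pderiv_X,
        map_add, eval_mul, eval_X, ContinuousLinearMap.add_apply]
      simp only [add_mul]
      rw [Finset.sum_add_distrib, add_comm]
      congr 1
      · rw [Finset.sum_eq_single j] <;> simp +contextual [Pi.single_apply, eq_comm]
      · rw [Finset.mul_sum]; apply Finset.sum_congr rfl; intro i _; ring

lemma hasStrictFDerivAt_eval_eucl {n : ℕ} (p : MvPoly n) (x : EuclideanSpace ℝ (Fin n)) :
    HasStrictFDerivAt (fun w : EuclideanSpace ℝ (Fin n) => eval (fun j => w j) p)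
      (innerSL ℝ (polyGrad p x)) x := by
  have h := hasStrictFDerivAt_eval_pi p (fun j => x j)
  have he : HasStrictFDerivAt (fun w : EuclideanSpace ℝ (Fin n) => (fun j => w j : Fin n → ℝ))
      (EuclideanSpace.equiv (Fin n) ℝ : EuclideanSpace ℝ (Fin n) →L[ℝ] (Fin n → ℝ)) x :=
    (EuclideanSpace.equiv (Fin n) ℝ : EuclideanSpace ℝ (Fin n) →L[ℝ] (Fin n → ℝ)).hasStrictFDerivAt
  have hc := h.comp x he
  refine hc.congr_fderiv (Eq.symm ?_)
  ext w
  simp only [innerSL_apply_apply, ContinuousLinearMap.coe_comp', Function.comp_apply,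
    ContinuousLinearMap.coe_sum', Finset.sum_apply, ContinuousLinearMap.coe_smul',
    Pi.smul_apply, ContinuousLinearMap.proj_apply, smul_eq_mul]
  rw [PiLp.inner_apply]
  apply Finset.sum_congr rfl
  intro j _
  simp [polyGrad, RCLike.inner_apply, mul_comm]

lemma exists_inner_eq {ι : Type*} [Fintype ι] {E : Type*} [NormedAddCommGroup E]
    [InnerProductSpace ℝ E] (w : ι → E) (hw : LinearIndependent ℝ w) (c : ι → ℝ) :
    ∃ d : E, ∀ i, ⟪w i, d⟫ = c i := by
  classical
  set K : Submodule ℝ E := Submodule.span ℝ (Set.range w) with hK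
  haveI : FiniteDimensional ℝ K := FiniteDimensional.span_of_finite ℝ (Set.finite_range w)
  let B : K →ₗ[ℝ] (ι → ℝ) :=
    LinearMap.pi fun i => ((innerSL ℝ (w i)).toLinearMap).comp K.subtype
  have hinj : Function.Injective B := by
    rw [← LinearMap.ker_eq_bot, LinearMap.ker_eq_bot']
    intro x hx
    have hx' : ∀ i, ⟪w i, (x : E)⟫ = 0 := fun i => congrFun hx i
    have hmem : (x : E) ∈ Kᗮ := by
      rw [Submodule.mem_orthogonal]
      intro u hu
      induction hu using Submodule.span_induction with
      | mem u hu => obtain ⟨i, rfl⟩ := hu; exact hx' i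
      | zero => simp
      | add u v _ _ hu hv => rw [inner_add_left, hu, hv, add_zero]
      | smul a u _ hu => rw [inner_smul_left, hu, mul_zero]
    have : (x : E) = 0 := by
      have := (Submodule.orthogonal_disjoint K).le_bot ⟨x.2, hmem⟩
      simpa using this
    exact Subtype.ext this
  have hdim : Module.finrank ℝ K = Module.finrank ℝ (ι → ℝ) := by
    rw [hK, finrank_span_eq_card hw, Module.finrank_pi]
  have hsurj : Function.Surjective B :=
    (LinearMap.injective_iff_surjective_of_finrank_eq_finrank hdim).mp hinj
  obtain ⟨x, hx⟩ := hsurj c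
  exact ⟨x, fun i => congrFun hx i⟩

lemma inner_nonpos_key {n r : ℕ} (g : Fin r → MvPoly n) (y z : EuclideanSpace ℝ (Fin n))
    (hz : z ∈ Sg g) (hmin : dist y z = infDist y (Sg g)) (hCQC : CQC g z)
    (c : {i : Fin r // eval (fun j => z j) (g i) = 0} → ℝ) (hc : ∀ i, 0 ≤ c i)
    (d : EuclideanSpace ℝ (Fin n))
    (hd : ∀ i : {i : Fin r // eval (fun j => z j) (g i) = 0}, ⟪polyGrad (g i.1) z, d⟫ = c i) :
    ⟪y - z, d⟫ ≤ 0 := by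
  classical
  set f' : EuclideanSpace ℝ (Fin n) →L[ℝ] ({i : Fin r // eval (fun j => z j) (g i) = 0} → ℝ) :=
    ContinuousLinearMap.pi (fun i => innerSL ℝ (polyGrad (g i.1) z)) with hf'def
  have hf'apply : ∀ (v : EuclideanSpace ℝ (Fin n)) i, f' v i = ⟪polyGrad (g i.1) z, v⟫ := by
    intro v i; simp [hf'def]
  set G : EuclideanSpace ℝ (Fin n) → ({i : Fin r // eval (fun j => z j) (g i) = 0} → ℝ) :=
    fun x => (fun i => eval (fun j => x j) (g i.1)) with hGdef
  have hG : HasStrictFDerivAt G f' z :=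
    hasStrictFDerivAt_pi.mpr fun i => hasStrictFDerivAt_eval_eucl (g i.1) z
  have hrange : f'.range = ⊤ := by
    rw [LinearMap.range_eq_top]
    intro cc
    obtain ⟨d0, hd0⟩ := exists_inner_eq _ hCQC cc
    exact ⟨d0, funext fun i => by exact (hf'apply d0 i).trans (hd0 i)⟩
  set K : Submodule ℝ (EuclideanSpace ℝ (Fin n)) := f'.ker with hKdef
  set proj : EuclideanSpace ℝ (Fin n) →L[ℝ] K := K.orthogonalProjectionOnto with hprojdef
  have hrange2 : proj.range = ⊤ := by
    rw [LinearMap.range_eq_top]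
    intro k
    exact ⟨(k : EuclideanSpace ℝ (Fin n)), Submodule.orthogonalProjectionOnto_mem_subspace_eq_self k⟩
  have hcompl : IsCompl f'.ker proj.ker := by
    rw [hprojdef, Submodule.ker_orthogonalProjectionOnto, ← hKdef]
    exact Submodule.isCompl_orthogonal_of_hasOrthogonalProjection
  set equiv := ContinuousLinearMap.equivProdOfSurjectiveOfIsCompl f' proj hrange hrange2 hcompl
    with heq
  set P : EuclideanSpace ℝ (Fin n) → ({i : Fin r // eval (fun j => z j) (g i) = 0} → ℝ) × K :=
    fun x => (G x, proj x) with hPdef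
  have hP : HasStrictFDerivAt P (equiv : EuclideanSpace ℝ (Fin n) →L[ℝ] _) z := by
    have h := hG.prodMk proj.hasStrictFDerivAt
    exact h
  have hPz : P z = (0, proj z) := by
    have hG0 : G z = 0 := funext fun i => i.2
    simp [hPdef, hG0]
  set Ψ := hP.localInverse P _ z with hΨdef
  have hf'd : f' d = c := funext fun i => by rw [hf'apply]; exact hd i
  set η : ℝ → ({i : Fin r // eval (fun j => z j) (g i) = 0} → ℝ) × K :=
    fun t => (t • c, proj z + t • proj d) with hηdef
  have hη0 : η 0 = P z := by simp [hηdef, hPz]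
  have hη : HasDerivAt η (c, proj d) 0 := by
    have h1 : HasDerivAt (fun t : ℝ => t • c) ((1:ℝ) • c) 0 :=
      (hasDerivAt_id (0:ℝ)).smul_const c
    have h2 : HasDerivAt (fun t : ℝ => proj z + t • proj d) ((1:ℝ) • proj d) 0 :=
      ((hasDerivAt_id (0:ℝ)).smul_const (proj d)).const_add (proj z)
    rw [one_smul] at h1 h2
    exact h1.prodMk h2
  set γ : ℝ → EuclideanSpace ℝ (Fin n) := fun t => Ψ (η t) with hγdef
  have hγ0 : γ 0 = z := by
    rw [hγdef]; simp only [hη0]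
    rw [hΨdef]
    exact hP.localInverse_apply_image
  have hΨd : HasFDerivAt Ψ (equiv.symm : _ →L[ℝ] EuclideanSpace ℝ (Fin n)) (η 0) := by
    rw [hη0]
    exact hP.to_localInverse.hasFDerivAt
  have hsymm : equiv.symm (c, proj d) = d := by
    have h : equiv d = (c, proj d) := by
      rw [heq, ContinuousLinearMap.equivProdOfSurjectiveOfIsCompl_apply, hf'd]
    rw [← h, ContinuousLinearEquiv.symm_apply_apply]
  have hγ : HasDerivAt γ d 0 := by
    have h := hΨd.comp_hasDerivAt 0 hη
    rw [← hsymm]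
    exact h
  have hev : ∀ᶠ t in nhds (0:ℝ), P (γ t) = η t := by
    have h1 := hP.eventually_right_inverse
    have h2 : Filter.Tendsto η (nhds 0) (nhds (P z)) := by
      rw [← hη0]; exact hη.continuousAt
    exact h2.eventually h1
  have hpos : ∀ᶠ t in nhds (0:ℝ), ∀ i : Fin r,
      eval (fun j => z j) (g i) ≠ 0 → 0 < eval (fun j => γ t j) (g i) := by
    rw [Filter.eventually_all]
    intro i
    by_cases h0 : eval (fun j => z j) (g i) = 0
    · exact Filter.Eventually.of_forall fun t hne => absurd h0 hne
    · have hcont : ContinuousAt (fun t : ℝ => eval (fun j => γ t j) (g i)) 0 := by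
        have hpc : ContinuousAt (fun x : EuclideanSpace ℝ (Fin n) => eval (fun j => x j) (g i))
            (γ 0) := (hasStrictFDerivAt_eval_eucl (g i) (γ 0)).continuousAt
        exact hpc.comp hγ.continuousAt
      have hval : (0:ℝ) < eval (fun j => γ 0 j) (g i) := by
        rw [hγ0]
        exact lt_of_le_of_ne (hz i) (Ne.symm h0)
      exact (hcont.eventually (eventually_gt_nhds hval)).mono fun t ht _ => ht
  have hfeas : ∀ᶠ t in nhdsWithin (0:ℝ) (Ici 0), γ t ∈ Sg g := by
    have h1 : ∀ᶠ t in nhdsWithin (0:ℝ) (Ici 0), P (γ t) = η t ∧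
        (∀ i : Fin r, eval (fun j => z j) (g i) ≠ 0 → 0 < eval (fun j => γ t j) (g i)) :=
      (hev.and hpos).filter_mono nhdsWithin_le_nhds
    have h2 : ∀ᶠ t in nhdsWithin (0:ℝ) (Ici 0), t ∈ Ici (0:ℝ) :=
      eventually_mem_nhdsWithin
    filter_upwards [h1, h2] with t ht htnn
    intro i
    by_cases h0 : eval (fun j => z j) (g i) = 0
    · have hfirst : G (γ t) = t • c := congrArg Prod.fst ht.1
      have h3 := congrFun hfirst ⟨i, h0⟩
      rw [hGdef] at h3
      simp only at h3
      rw [h3]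
      exact mul_nonneg htnn (hc _)
    · exact le_of_lt (ht.2 i h0)
  set φ : ℝ → ℝ := fun t => ⟪y - γ t, y - γ t⟫ with hφdef
  have hmono : IsLocalMinOn φ (Ici (0:ℝ)) 0 := by
    have h : ∀ᶠ t in nhdsWithin (0:ℝ) (Ici 0), φ 0 ≤ φ t := by
      filter_upwards [hfeas] with t htS
      have hd1 : dist y z ≤ dist y (γ t) := by
        rw [hmin]; exact infDist_le_dist_of_mem htS
      rw [hφdef]
      simp only
      rw [real_inner_self_eq_norm_sq, real_inner_self_eq_norm_sq, hγ0,
        ← dist_eq_norm, ← dist_eq_norm]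
      exact pow_le_pow_left₀ dist_nonneg hd1 2
    exact h
  have hu : HasDerivAt (fun t => y - γ t) (-d) 0 := by
    have h := (hasDerivAt_const (0:ℝ) y).sub hγ
    rwa [zero_sub] at h
  have hφ' : HasDerivAt φ (⟪y - γ 0, -d⟫ + ⟪-d, y - γ 0⟫) 0 := hu.inner ℝ hu
  have htan : (1:ℝ) ∈ posTangentConeAt (Ici (0:ℝ)) 0 := by
    apply mem_posTangentConeAt_of_segment_subset
    rw [zero_add]
    exact (convex_Ici 0).segment_subset self_mem_Ici (by norm_num)
  have hnonneg := hmono.hasFDerivWithinAt_nonneg hφ'.hasDerivWithinAt.hasFDerivWithinAt htan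
  simp only [ContinuousLinearMap.smulRight_apply, ContinuousLinearMap.one_apply,
    ContinuousLinearMap.toSpanSingleton_apply, one_smul] at hnonneg
  rw [hγ0] at hnonneg
  have h1 : ⟪y - z, -d⟫ = -⟪y - z, d⟫ := by simp [inner_neg_right]
  have h2 : ⟪-d, y - z⟫ = -⟪y - z, d⟫ := by
    rw [inner_neg_left]
    rw [real_inner_comm]
  rw [h1, h2] at hnonneg
  linarith

/-- KKT-type representation of `y - z` for a closest point `z ∈ S(g)` to `y`,
under linear independence of the gradients of the active constraints
(Lemma `lem::difference_as_gradient`). -/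
theorem difference_as_gradient {n r : ℕ} (g : Fin r → MvPoly n)
    (y z : EuclideanSpace ℝ (Fin n))
    (hy : y ∉ Sg g) (hz : z ∈ Sg g)
    (hmin : dist y z = infDist y (Sg g))
    (hCQC : CQC g z) :
    ∃ lam : Fin r → ℝ,
      (∀ i, 0 ≤ lam i) ∧
      (∀ i, eval (fun j => z j) (g i) ≠ 0 → lam i = 0) ∧
      y - z = ∑ i, lam i • (-polyGrad (g i) z) := by
  classical
  set w : {i : Fin r // eval (fun j => z j) (g i) = 0} → EuclideanSpace ℝ (Fin n) :=
    fun i => polyGrad (g i.1) z with hwdef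
  have hw : LinearIndependent ℝ w := hCQC
  set K : Submodule ℝ (EuclideanSpace ℝ (Fin n)) := Submodule.span ℝ (Set.range w) with hKdef
  haveI : FiniteDimensional ℝ K := FiniteDimensional.span_of_finite ℝ (Set.finite_range w)
  set v : EuclideanSpace ℝ (Fin n) := y - z with hvdef
  -- Step A : v ∈ K
  set u : EuclideanSpace ℝ (Fin n) := v - (K.orthogonalProjectionOnto v : EuclideanSpace ℝ (Fin n))
    with hudef
  have huK : u ∈ Kᗮ := Submodule.sub_starProjection_mem_orthogonal v
  have hu_orth : ∀ i, ⟪w i, u⟫ = 0 := fun i =>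
    (Submodule.mem_orthogonal K u).mp huK (w i) (Submodule.subset_span (Set.mem_range_self i))
  have key1 : ⟪v, u⟫ ≤ 0 :=
    inner_nonpos_key g y z hz hmin hCQC 0 (fun _ => le_rfl) u (fun i => by
      rw [hu_orth i]; rfl)
  have key2 : ⟪v, -u⟫ ≤ 0 :=
    inner_nonpos_key g y z hz hmin hCQC 0 (fun _ => le_rfl) (-u) (fun i => by
      rw [inner_neg_right, hu_orth i, neg_zero]; rfl)
  have hvu : ⟪v, u⟫ = 0 := by
    rw [inner_neg_right] at key2
    linarith
  have hpu : ⟪(K.orthogonalProjectionOnto v : EuclideanSpace ℝ (Fin n)), u⟫ = 0 :=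
    (Submodule.mem_orthogonal K u).mp huK _ (K.orthogonalProjectionOnto v).2
  have huu : ⟪u, u⟫ = (0:ℝ) := by
    have hexp : ⟪v, u⟫ = ⟪(K.orthogonalProjectionOnto v : EuclideanSpace ℝ (Fin n)), u⟫ + ⟪u, u⟫ := by
      rw [hudef]
      rw [← inner_add_left]
      congr 1
      abel
    rw [hvu, hpu] at hexp
    linarith
  have hu0 : u = 0 := by
    rwa [inner_self_eq_zero] at huu
  have hvK : v ∈ K := by
    have : v = (K.orthogonalProjectionOnto v : EuclideanSpace ℝ (Fin n)) := by
      have := sub_eq_zero.mp hu0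
      exact this
    rw [this]
    exact (K.orthogonalProjectionOnto v).2
  obtain ⟨μ, hμ⟩ := (Submodule.mem_span_range_iff_exists_fun ℝ).mp hvK
  -- Step B : coefficients are nonpositive
  have hμle : ∀ i₀, μ i₀ ≤ 0 := by
    intro i₀
    set cc : {i : Fin r // eval (fun j => z j) (g i) = 0} → ℝ := Pi.single i₀ 1 with hccdef
    obtain ⟨d, hd⟩ := exists_inner_eq w hw cc
    have hc : ∀ i, (0:ℝ) ≤ cc i := by
      intro i
      rcases eq_or_ne i i₀ with h | h <;> simp [hccdef, Pi.single_apply, h]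
    have hkey := inner_nonpos_key g y z hz hmin hCQC cc hc d hd
    have hvd : ⟪v, d⟫ = μ i₀ := by
      rw [← hμ, sum_inner]
      rw [Finset.sum_eq_single i₀]
      · rw [real_inner_smul_left, hd i₀]
        simp [hccdef]
      · intro i _ hne
        rw [real_inner_smul_left, hd i]
        simp [hccdef, Pi.single_apply, hne]
      · intro h
        exact absurd (Finset.mem_univ i₀) h
    linarith
  refine ⟨fun i => if h : eval (fun j => z j) (g i) = 0 then -μ ⟨i, h⟩ else 0, ?_, ?_, ?_⟩
  · intro i
    by_cases h : eval (fun j => z j) (g i) = 0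
    · simp only [dif_pos h]
      exact neg_nonneg.mpr (hμle ⟨i, h⟩)
    · simp [dif_neg h]
  · intro i hne
    simp [dif_neg hne]
  · have hsplit := Finset.sum_filter_add_sum_filter_not Finset.univ
      (fun i : Fin r => eval (fun j => z j) (g i) = 0)
      (fun i => (if h : eval (fun j => z j) (g i) = 0 then -μ ⟨i, h⟩ else 0) •
        (-polyGrad (g i) z))
    rw [← hsplit]
    have hzero : (∑ i ∈ Finset.univ.filter
        (fun i : Fin r => ¬ eval (fun j => z j) (g i) = 0),
        (if h : eval (fun j => z j) (g i) = 0 then -μ ⟨i, h⟩ else 0) •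
          (-polyGrad (g i) z)) = 0 := by
      apply Finset.sum_eq_zero
      intro i hi
      rw [Finset.mem_filter] at hi
      rw [dif_neg hi.2, zero_smul]
    rw [hzero, add_zero]
    rw [Finset.sum_subtype (p := fun i : Fin r => eval (fun j => z j) (g i) = 0)
        (Finset.univ.filter
        (fun i : Fin r => eval (fun j => z j) (g i) = 0))
        (by intro x; simp)
        (fun i => (if h : eval (fun j => z j) (g i) = 0 then -μ ⟨i, h⟩ else 0) •
          (-polyGrad (g i) z))]
    have hterm : ∀ i : {i : Fin r // eval (fun j => z j) (g i) = 0},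
        (if h : eval (fun j => z j) (g i.1) = 0 then -μ ⟨i.1, h⟩ else 0) •
          (-polyGrad (g i.1) z) = μ i • w i := by
      intro i
      rw [dif_pos i.2, Subtype.coe_eta, neg_smul, smul_neg, neg_neg]
    rw [Finset.sum_congr rfl (fun i _ => hterm i), hμ]


end
end

section
/- Let g = (g₁,…,g_r) be polynomials in ℝ[X₁,…,X_n] with ‖gᵢ‖ ≤ 1/2 for all i and with S = S(g) nonempty and contained in [−1,1]ⁿ. Let f be a polynomial with f* = min_{x∈S} f(x) > 0, let A = {x ∈ [−1,1]ⁿ : f(x) ≤ (3/4)f*}, and let δ > 0 be such that G(x) ≥ δ for all x ∈ A. Let k ≥ 1 and let h be a univariate real polynomial satisfying: 1 − 1/k ≤ h(t) ≤ 1 + 1/k for t ∈ [−1,−δ]; h(t) ≤ 2/k for t ∈ [0,1]; and 0 ≤ h(t) ≤ 1 + 1/k for t ∈ [−1,1]. If s > 6‖f‖/δ, k > (2r−2)/δ + 1, and k > 4rs/f*, then the polynomial p = f − s·Σ_{i=1}^r h(gᵢ)·gᵢ satisfies p(x) ≥ f*/2 for all x ∈ [−1,1]ⁿ. -/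
open MvPolynomial Metric Set

noncomputable section

/-- Evaluation of a composition. -/
lemma eval_polyaeval {n : ℕ} (q : MvPoly n) (h : Polynomial ℝ) (x : Fin n → ℝ) :
    eval x (Polynomial.aeval q h) = Polynomial.eval (eval x q) h := by
  rw [Polynomial.aeval_def, Polynomial.hom_eval₂]
  rw [Polynomial.eval, Polynomial.eval₂_eq_eval_map]
  congr 1
  · ext a : 1
    simp [MvPolynomial.algebraMap_eq]

/-- A crude bound on evaluations over the box. -/
lemma abs_eval_le_sum {n : ℕ} (p : MvPoly n) (x : Fin n → ℝ) (hx : ∀ i, |x i| ≤ 1) :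
    |eval x p| ≤ ∑ m ∈ p.support, |coeff m p| := by
  rw [MvPolynomial.eval_eq]
  refine (Finset.abs_sum_le_sum_abs _ _).trans (Finset.sum_le_sum fun m _ => ?_)
  rw [abs_mul]
  refine mul_le_of_le_one_right (abs_nonneg _) ?_
  rw [Finset.abs_prod]
  refine Finset.prod_le_one (fun i _ => abs_nonneg _) fun i _ => ?_
  rw [abs_pow]
  exact pow_le_one₀ (abs_nonneg _) (hx i)

lemma abs_eval_le_boxNorm {n : ℕ} (p : MvPoly n) {x : EuclideanSpace ℝ (Fin n)}
    (hx : x ∈ Box n) : |eval (fun j => x j) p| ≤ boxNorm p := by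
  refine le_csSup ⟨∑ m ∈ p.support, |coeff m p|, ?_⟩ ⟨x, hx, rfl⟩
  rintro y ⟨z, hz, rfl⟩
  exact abs_eval_le_sum p _ hz

/-- the perturbed polynomial `p = f - s ∑ᵢ h(gᵢ)·gᵢ` is at least `f*/2`
on the box `[-1,1]ⁿ` (Proposition `prop::bounds`). -/
theorem perturbation_bound {n r : ℕ} (g : Fin r → MvPoly n)
    (hgnorm : ∀ i, boxNorm (g i) ≤ 1 / 2)
    (hS : (Sg g).Nonempty) (hSbox : Sg g ⊆ Box n)
    (f : MvPoly n) (fstar : ℝ)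
    (hmin : ∀ x ∈ Sg g, fstar ≤ eval (fun j => x j) f)
    (hatt : ∃ x ∈ Sg g, eval (fun j => x j) f = fstar)
    (hpos : 0 < fstar)
    (δ : ℝ) (hδ : 0 < δ)
    (hδG : ∀ x ∈ Box n, eval (fun j => x j) f ≤ 3 / 4 * fstar → δ ≤ Gfun g x)
    (k : ℝ) (hk : 1 ≤ k) (h : Polynomial ℝ)
    (hh1 : ∀ t ∈ Icc (-1 : ℝ) (-δ), 1 - 1 / k ≤ h.eval t ∧ h.eval t ≤ 1 + 1 / k)
    (hh2 : ∀ t ∈ Icc (0 : ℝ) 1, h.eval t ≤ 2 / k)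
    (hh3 : ∀ t ∈ Icc (-1 : ℝ) 1, 0 ≤ h.eval t ∧ h.eval t ≤ 1 + 1 / k)
    (s : ℝ) (hs : 6 * boxNorm f / δ < s)
    (hk1 : (2 * r - 2) / δ + 1 < k)
    (hk2 : 4 * r * s / fstar < k) :
    ∀ x ∈ Box n,
      fstar / 2 ≤
        eval (fun j => x j) (f - C s * ∑ i, (Polynomial.aeval (g i) h) * g i) := by
  intro x hx
  have hk0 : (0 : ℝ) < k := lt_of_lt_of_le one_pos hk
  -- basic norm facts
  have hB0 : 0 ≤ boxNorm f := (abs_nonneg _).trans (abs_eval_le_boxNorm f hx)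
  have hs0 : 0 < s := lt_of_le_of_lt (by positivity) hs
  have hF : |eval (fun j => x j) f| ≤ boxNorm f := abs_eval_le_boxNorm f hx
  have hfB : fstar ≤ boxNorm f := by
    obtain ⟨x₀, hx₀, hfx₀⟩ := hatt
    calc fstar = eval (fun j => x₀ j) f := hfx₀.symm
      _ ≤ |eval (fun j => x₀ j) f| := le_abs_self _
      _ ≤ boxNorm f := abs_eval_le_boxNorm f (hSbox hx₀)
  -- the values of the constraints
  set v : Fin r → ℝ := fun i => eval (fun j => x j) (g i) with hv
  have hvabs : ∀ i, |v i| ≤ 1 / 2 := fun i =>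
    (abs_eval_le_boxNorm (g i) hx).trans (hgnorm i)
  have hvIcc : ∀ i, v i ∈ Icc (-1 : ℝ) 1 := by
    intro i
    have := abs_le.1 (hvabs i)
    exact ⟨by linarith [this.1], by linarith [this.2]⟩
  have heval : eval (fun j => x j) (f - C s * ∑ i, (Polynomial.aeval (g i) h) * g i)
      = eval (fun j => x j) f - s * ∑ i, Polynomial.eval (v i) h * v i := by
    simp only [hv, map_sub, map_mul, eval_C, map_sum, eval_polyaeval]
  rw [heval]
  -- each term is at most 1/k
  have hterm : ∀ i, Polynomial.eval (v i) h * v i ≤ 1 / k := by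
    intro i
    rcases le_or_gt 0 (v i) with h0 | h0
    · have h2 := hh2 (v i) ⟨h0, (hvIcc i).2⟩
      have hvle : v i ≤ 1 / 2 := (abs_le.1 (hvabs i)).2
      calc Polynomial.eval (v i) h * v i ≤ (2 / k) * (1 / 2) :=
            mul_le_mul h2 hvle h0 (by positivity)
        _ = 1 / k := by ring
    · have hh0 := (hh3 (v i) (hvIcc i)).1
      have : Polynomial.eval (v i) h * v i ≤ 0 := mul_nonpos_of_nonneg_of_nonpos hh0 h0.le
      have h1k : (0 : ℝ) ≤ 1 / k := by positivity
      linarith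
  have hrs : 4 * (r : ℝ) * s < k * fstar := by
    rw [div_lt_iff₀ hpos] at hk2; linarith
  by_cases hcase : eval (fun j => x j) f ≤ 3 / 4 * fstar
  · -- far from the minimum of f : use the δ-gap
    have hGx : δ ≤ Gfun g x := hδG x hx hcase
    have hGx' : δ ≤ |min (⨅ i, v i) 0| := hGx
    -- r ≥ 1
    have hr : 0 < r := by
      rcases Nat.eq_zero_or_pos r with h0 | h0
      · exfalso
        subst h0
        rw [Real.iInf_of_isEmpty] at hGx'
        simp at hGx'
        linarith
      · exact h0
    have : Nonempty (Fin r) := ⟨⟨0, hr⟩⟩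
    -- find the minimizing constraint
    obtain ⟨i₀, -, hi₀min⟩ := Finset.exists_min_image Finset.univ v ⟨⟨0, hr⟩, Finset.mem_univ _⟩
    have hbdd : BddBelow (Set.range v) := (Set.finite_range v).bddBelow
    have hainf : (⨅ i, v i) = v i₀ :=
      le_antisymm (ciInf_le hbdd i₀) (le_ciInf fun i => hi₀min i (Finset.mem_univ i))
    rw [hainf] at hGx'
    have hi₀ : v i₀ ≤ -δ := by
      rcases le_or_gt 0 (v i₀) with h0 | h0
      · rw [min_eq_right h0, abs_zero] at hGx'; linarith
      · rw [min_eq_left (by linarith), abs_of_neg h0] at hGx'; linarith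
    have hδhalf : δ ≤ 1 / 2 := by
      have h1 := (abs_le.1 (hvabs i₀)).1
      linarith
    -- turn the division hypotheses into multiplicative facts
    have hs6 : 6 * boxNorm f < s * δ := by
      rw [div_lt_iff₀ hδ] at hs; linarith
    have h2r : 2 * (r : ℝ) - 2 < δ * (k - 1) := by
      have h1 : (2 * (r : ℝ) - 2) / δ < k - 1 := by linarith
      rw [div_lt_iff₀ hδ] at h1; linarith
    have hr1 : (1 : ℝ) ≤ (r : ℝ) := by exact_mod_cast hr
    -- k is at least 2
    have hk2' : (2 : ℝ) ≤ k := by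
      nlinarith [mul_le_mul_of_nonneg_left hδhalf hs0.le,
        mul_nonneg (sub_nonneg.2 hr1) hs0.le, hpos, hfB, hs6, hrs]
    -- bound the sum
    have h1k : (0 : ℝ) ≤ 1 - 1 / k := by
      rw [sub_nonneg]
      exact div_le_one_of_le₀ hk (by positivity)
    have hterm0 : Polynomial.eval (v i₀) h * v i₀ ≤ (1 - 1 / k) * (-δ) := by
      have hv0 : v i₀ ∈ Icc (-1 : ℝ) (-δ) := ⟨(hvIcc i₀).1, hi₀⟩
      have hh := (hh1 _ hv0).1
      calc Polynomial.eval (v i₀) h * v i₀ ≤ (1 - 1 / k) * v i₀ :=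
            mul_le_mul_of_nonpos_right hh (by linarith)
        _ ≤ (1 - 1 / k) * (-δ) := mul_le_mul_of_nonneg_left hi₀ h1k
    have hsum : ∑ i, Polynomial.eval (v i) h * v i
        ≤ (1 - 1 / k) * (-δ) + ((r : ℝ) - 1) * (1 / k) := by
      rw [← Finset.sum_erase_add _ _ (Finset.mem_univ i₀)]
      have h1 : ∑ i ∈ Finset.univ.erase i₀, Polynomial.eval (v i) h * v i
          ≤ ∑ _i ∈ Finset.univ.erase i₀, (1 / k : ℝ) :=
        Finset.sum_le_sum fun i _ => hterm i
      rw [Finset.sum_const, Finset.card_erase_of_mem (Finset.mem_univ i₀),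
        Finset.card_univ, Fintype.card_fin, nsmul_eq_mul, Nat.cast_sub hr,
        Nat.cast_one] at h1
      linarith
    -- the main numeric inequality
    have hfinal : fstar / 2 + boxNorm f ≤ s * ((1 - 1 / k) * δ - ((r : ℝ) - 1) * (1 / k)) := by
      have P1 : s * (2 * (r : ℝ) - 2) ≤ s * (δ * (k - 1)) :=
        mul_le_mul_of_nonneg_left h2r.le hs0.le
      have P2 : 6 * boxNorm f * (k - 1) ≤ s * δ * (k - 1) :=
        mul_le_mul_of_nonneg_right hs6.le (by linarith)
      have P3 : 0 ≤ boxNorm f * (k - 2) := mul_nonneg hB0 (by linarith)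
      have P4 : 0 ≤ (boxNorm f - fstar) * k := mul_nonneg (by linarith) hk0.le
      have hmain : (fstar / 2 + boxNorm f) * k ≤ s * (δ * (k - 1) - ((r : ℝ) - 1)) := by
        linarith [P1, P2, P3, P4]
      have hexp : (1 - 1 / k) * δ - ((r : ℝ) - 1) * (1 / k)
          = (δ * (k - 1) - ((r : ℝ) - 1)) / k := by
        field_simp
      rw [hexp, ← mul_div_assoc, le_div_iff₀ hk0]
      exact hmain
    have hstep : s * (∑ i, Polynomial.eval (v i) h * v i)
        ≤ s * ((1 - 1 / k) * (-δ) + ((r : ℝ) - 1) * (1 / k)) :=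
      mul_le_mul_of_nonneg_left hsum hs0.le
    have hFge : -(boxNorm f) ≤ eval (fun j => x j) f := (abs_le.1 hF).1
    linarith [hstep, hfinal, hFge]
  · -- f is large : the perturbation is small
    push_neg at hcase
    have hsum : ∑ i, Polynomial.eval (v i) h * v i ≤ (r : ℝ) * (1 / k) := by
      calc ∑ i, Polynomial.eval (v i) h * v i ≤ ∑ _i : Fin r, (1 / k : ℝ) :=
            Finset.sum_le_sum fun i _ => hterm i
        _ = (r : ℝ) * (1 / k) := by
            rw [Finset.sum_const, Finset.card_univ, Fintype.card_fin, nsmul_eq_mul]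
    have hstep : s * (∑ i, Polynomial.eval (v i) h * v i) ≤ s * ((r : ℝ) * (1 / k)) :=
      mul_le_mul_of_nonneg_left hsum hs0.le
    have hq : s * ((r : ℝ) * (1 / k)) < fstar / 4 := by
      have he : s * ((r : ℝ) * (1 / k)) = (r : ℝ) * s / k := by ring
      rw [he, div_lt_iff₀ hk0]
      linarith
    linarith

end
end

section
/- Let f ∈ ℝ[T] be a univariate polynomial of degree d with f(t) ≥ 0 for all t ∈ [−1, 1]. Then there exist sums of squares of polynomials s₀, s₁, s₂ ∈ ℝ[T] such that f = s₀ + s₁·(1−T) + s₂·(1+T), with deg s₀ ≤ d+1, deg(s₁·(1−T)) ≤ d+1, and deg(s₂·(1+T)) ≤ d+1. -/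
/-!
Induct on the degree. Subtracting the minimum `m ≥ 0` of `f` on `[-1, 1]` leaves a polynomial `g`
vanishing at a minimiser `r`. If `r = ±1` then `1 ∓ X` divides `g`; if `r` is interior it is a
double root, so `(X - r)²` divides `g`. In each case the quotient is again nonnegative on
`[-1, 1]` and of smaller degree. Multiplying by `1 ∓ X` or by a square keeps the degree bounds
only if the product `(1 - X)(1 + X)` is allowed as a fourth weight; at the end it is removed via
`2 (1 - X)(1 + X) = (1 + X)² (1 - X) + (1 - X)² (1 + X)`, which costs one degree.
-/

open Polynomial Set

/-- A univariate real polynomial that is a sum of squares. -/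
def IsSOS1 (p : Polynomial ℝ) : Prop :=
  ∃ (k : ℕ) (q : Fin k → Polynomial ℝ), p = ∑ i, (q i) ^ 2

lemma isSOS1_zero : IsSOS1 0 := ⟨0, fun _ => 0, by simp⟩

lemma isSOS1_C {c : ℝ} (hc : 0 ≤ c) : IsSOS1 (C c) :=
  ⟨1, fun _ => C √c, by rw [Fin.sum_univ_one, ← C_pow, Real.sq_sqrt hc]⟩

lemma IsSOS1.add {p q : ℝ[X]} (hp : IsSOS1 p) (hq : IsSOS1 q) : IsSOS1 (p + q) := by
  obtain ⟨k, u, rfl⟩ := hp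
  obtain ⟨l, v, rfl⟩ := hq
  exact ⟨k + l, Fin.append u v, by simp [Fin.sum_univ_add]⟩

lemma IsSOS1.sq_mul {p : ℝ[X]} (g : ℝ[X]) (hp : IsSOS1 p) : IsSOS1 (g ^ 2 * p) := by
  obtain ⟨k, u, rfl⟩ := hp
  exact ⟨k, fun i => g * u i, by simp [Finset.mul_sum, mul_pow]⟩

lemma IsSOS1.C_mul {p : ℝ[X]} {c : ℝ} (hc : 0 ≤ c) (hp : IsSOS1 p) : IsSOS1 (C c * p) := by
  simpa [← C_pow, Real.sq_sqrt hc] using hp.sq_mul (C √c)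

def IsSOSMul (w : ℝ[X]) (n : ℕ) (p : ℝ[X]) : Prop :=
  ∃ s, IsSOS1 s ∧ p = s * w ∧ p.natDegree ≤ n

namespace IsSOSMul

variable {w h p q : ℝ[X]} {m n k : ℕ}

lemma zero : IsSOSMul w n 0 := ⟨0, isSOS1_zero, by simp, by simp⟩

lemma of_isSOS1 (hp : IsSOS1 p) (hn : p.natDegree ≤ n) : IsSOSMul 1 n p :=
  ⟨p, hp, (mul_one p).symm, hn⟩

lemma mono (hmn : m ≤ n) (hp : IsSOSMul w m p) : IsSOSMul w n p :=
  let ⟨s, hs, e, hd⟩ := hp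
  ⟨s, hs, e, hd.trans hmn⟩

lemma add (hp : IsSOSMul w n p) (hq : IsSOSMul w n q) : IsSOSMul w n (p + q) := by
  obtain ⟨s, hs, rfl, hps⟩ := hp
  obtain ⟨t, ht, rfl, hqt⟩ := hq
  exact ⟨s + t, hs.add ht, by ring, (natDegree_add_le _ _).trans (max_le hps hqt)⟩

lemma C_mul {c : ℝ} (hc : 0 ≤ c) (hp : IsSOSMul w n p) : IsSOSMul w n (C c * p) := by
  obtain ⟨s, hs, rfl, hd⟩ := hp
  exact ⟨C c * s, hs.C_mul hc, by ring, (natDegree_C_mul_le _ _).trans hd⟩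

lemma sq_mul (hh : h.natDegree ≤ k) (hp : IsSOSMul w n p) :
    IsSOSMul w (n + 2 * k) (h ^ 2 * p) := by
  obtain ⟨s, hs, rfl, hd⟩ := hp
  refine ⟨h ^ 2 * s, hs.sq_mul h, by ring, natDegree_mul_le.trans ?_⟩
  have := natDegree_pow_le (p := h) (n := 2)
  omega

lemma mul_weight (hh : h.natDegree ≤ k) (hp : IsSOSMul w n p) :
    IsSOSMul (h * w) (n + k) (h * p) := by
  obtain ⟨s, hs, rfl, hd⟩ := hp
  exact ⟨s, hs, by ring, natDegree_mul_le.trans (by omega)⟩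

lemma mul_of_weight_mul (hh : h.natDegree ≤ k) (hp : IsSOSMul (h * w) n p) :
    IsSOSMul w (n + k) (h * p) := by
  obtain ⟨s, hs, rfl, hd⟩ := hp
  exact ⟨h ^ 2 * s, hs.sq_mul h, by ring, natDegree_mul_le.trans (by omega)⟩

end IsSOSMul

def InTruncPreordering (n : ℕ) (f : ℝ[X]) : Prop :=
  ∃ p₀ p₁ p₂ p₃, IsSOSMul 1 n p₀ ∧ IsSOSMul (1 - X) n p₁ ∧ IsSOSMul (1 + X) n p₂ ∧
    IsSOSMul ((1 - X) * (1 + X)) n p₃ ∧ f = p₀ + p₁ + p₂ + p₃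

lemma natDegree_one_sub_X : (1 - X : ℝ[X]).natDegree = 1 := by compute_degree!

lemma natDegree_one_add_X : (1 + X : ℝ[X]).natDegree = 1 := by compute_degree!

namespace InTruncPreordering

variable {f : ℝ[X]} {m n : ℕ}

lemma zero : InTruncPreordering n 0 :=
  ⟨0, 0, 0, 0, .zero, .zero, .zero, .zero, by simp⟩

lemma mono (hmn : m ≤ n) (hf : InTruncPreordering m f) : InTruncPreordering n f :=
  let ⟨p₀, p₁, p₂, p₃, h₀, h₁, h₂, h₃, e⟩ := hf
  ⟨p₀, p₁, p₂, p₃, h₀.mono hmn, h₁.mono hmn, h₂.mono hmn, h₃.mono hmn, e⟩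

lemma add_C {c : ℝ} (hc : 0 ≤ c) (hf : InTruncPreordering n f) :
    InTruncPreordering n (f + C c) := by
  obtain ⟨p₀, p₁, p₂, p₃, h₀, h₁, h₂, h₃, rfl⟩ := hf
  exact ⟨p₀ + C c, p₁, p₂, p₃, h₀.add (.of_isSOS1 (isSOS1_C hc) (by simp)), h₁, h₂, h₃,
    by ring⟩

lemma one_sub_X_mul (hf : InTruncPreordering n f) :
    InTruncPreordering (n + 1) ((1 - X) * f) := by
  obtain ⟨p₀, p₁, p₂, p₃, h₀, h₁, h₂, h₃, rfl⟩ := hf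
  rw [← mul_one (1 - X)] at h₁
  have h₀' := h₀.mul_weight natDegree_one_sub_X.le
  rw [mul_one] at h₀'
  exact ⟨_, _, _, _, h₁.mul_of_weight_mul natDegree_one_sub_X.le, h₀',
    h₃.mul_of_weight_mul natDegree_one_sub_X.le, h₂.mul_weight natDegree_one_sub_X.le,
    by ring⟩

lemma one_add_X_mul (hf : InTruncPreordering n f) :
    InTruncPreordering (n + 1) ((1 + X) * f) := by
  obtain ⟨p₀, p₁, p₂, p₃, h₀, h₁, h₂, h₃, rfl⟩ := hf
  rw [← mul_one (1 + X)] at h₂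
  rw [mul_comm (1 - X)] at h₃
  have h₀' := h₀.mul_weight natDegree_one_add_X.le
  have h₁' := h₁.mul_weight natDegree_one_add_X.le
  rw [mul_one] at h₀'
  rw [mul_comm (1 + X)] at h₁'
  exact ⟨_, _, _, _, h₂.mul_of_weight_mul natDegree_one_add_X.le,
    h₃.mul_of_weight_mul natDegree_one_add_X.le, h₀', h₁', by ring⟩

lemma sq_mul (g : ℝ[X]) (hf : InTruncPreordering n f) :
    InTruncPreordering (n + (g ^ 2).natDegree) (g ^ 2 * f) := by
  obtain ⟨p₀, p₁, p₂, p₃, h₀, h₁, h₂, h₃, rfl⟩ := hf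
  rw [natDegree_pow]
  exact ⟨_, _, _, _, h₀.sq_mul le_rfl, h₁.sq_mul le_rfl, h₂.sq_mul le_rfl, h₃.sq_mul le_rfl,
    by ring⟩

lemma exists_three_terms (hf : InTruncPreordering n f) :
    ∃ p₀ p₁ p₂, IsSOSMul 1 (n + 1) p₀ ∧ IsSOSMul (1 - X) (n + 1) p₁ ∧
      IsSOSMul (1 + X) (n + 1) p₂ ∧ f = p₀ + p₁ + p₂ := by
  obtain ⟨p₀, p₁, p₂, p₃, h₀, h₁, h₂, h₃, rfl⟩ := hf
  have h₃' : IsSOSMul ((1 + X) * (1 - X)) n p₃ := by rwa [mul_comm (1 + X)]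
  refine ⟨p₀, p₁ + C 2⁻¹ * ((1 + X) * p₃), p₂ + C 2⁻¹ * ((1 - X) * p₃), h₀.mono n.le_succ,
    (h₁.mono n.le_succ).add ((h₃'.mul_of_weight_mul natDegree_one_add_X.le).C_mul (by norm_num)),
    (h₂.mono n.le_succ).add ((h₃.mul_of_weight_mul natDegree_one_sub_X.le).C_mul (by norm_num)),
    ?_⟩
  have : C (2⁻¹ : ℝ) * 2 = 1 := by rw [← C_ofNat, ← C_mul]; norm_num
  linear_combination (-p₃) * this

end InTruncPreordering

lemma nonneg_on_Icc_of_nonneg_on_Ioo_of_ne {k : ℝ → ℝ} (hk : Continuous k) {a b r : ℝ}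
    (hab : a < b) (h : ∀ t ∈ Ioo a b, t ≠ r → 0 ≤ k t) : ∀ t ∈ Icc a b, 0 ≤ k t := by
  have hclosed : IsClosed {t | 0 ≤ k t} := isClosed_le continuous_const hk
  have hIoo : Ioo a b ⊆ {t | 0 ≤ k t} :=
    ((dense_compl_singleton r).open_subset_closure_inter isOpen_Ioo).trans
      (closure_minimal (fun t ht => h t ht.1 ht.2) hclosed)
  rw [← closure_Ioo hab.ne]
  exact closure_minimal hIoo hclosed

lemma exists_factor_of_eval_eq_zero {g : ℝ[X]} {r : ℝ} (hg : g ≠ 0) (hr : r ∈ Icc (-1 : ℝ) 1)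
    (hg_nonneg : ∀ t ∈ Icc (-1 : ℝ) 1, 0 ≤ g.eval t) (hgr : g.eval r = 0) :
    ∃ q k : ℝ[X], g = q * k ∧ 0 < q.natDegree ∧ (∀ t ∈ Ioo (-1 : ℝ) 1, t ≠ r → 0 < q.eval t) ∧
      ∀ n h, InTruncPreordering n h → InTruncPreordering (n + q.natDegree) (q * h) := by
  rcases hr.2.eq_or_lt with rfl | hr₁
  · obtain ⟨k, hk⟩ := dvd_iff_isRoot.mpr hgr
    refine ⟨1 - X, -k, by rw [hk, C_1]; ring, by simp [natDegree_one_sub_X], ?_, ?_⟩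
    · intro t ht _
      simpa using ht.2
    · simpa only [natDegree_one_sub_X] using fun _ _ => InTruncPreordering.one_sub_X_mul
  rcases hr.1.eq_or_lt with rfl | hr₀
  · obtain ⟨k, hk⟩ := dvd_iff_isRoot.mpr hgr
    refine ⟨1 + X, k, by rw [hk, C_neg, C_1]; ring, by simp [natDegree_one_add_X], ?_, ?_⟩
    · intro t ht _
      simpa [add_comm] using neg_lt_iff_pos_add.mp ht.1
    · simpa only [natDegree_one_add_X] using fun _ _ => InTruncPreordering.one_add_X_mul
  -- an interior minimum is a double root
  have hmin : IsLocalMin (fun t => g.eval t) r := by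
    filter_upwards [Icc_mem_nhds hr₀ hr₁] with t ht
    simpa [hgr] using hg_nonneg t ht
  have hgr' : g.derivative.eval r = 0 := by simpa [Polynomial.deriv] using hmin.deriv_eq_zero
  obtain ⟨k, hk⟩ := (le_rootMultiplicity_iff hg).mp
    ((one_lt_rootMultiplicity_iff_isRoot hg).mpr ⟨hgr, hgr'⟩)
  refine ⟨(X - C r) ^ 2, k, hk, by simp, fun t _ htr => ?_, fun _ _ => .sq_mul _⟩
  have : t - r ≠ 0 := sub_ne_zero.mpr htr
  simp only [eval_pow, eval_sub, eval_X, eval_C]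
  positivity

theorem inTruncPreordering_of_nonneg {f : ℝ[X]} (hf : ∀ t ∈ Icc (-1 : ℝ) 1, 0 ≤ f.eval t) :
    InTruncPreordering f.natDegree f := by
  induction hn : f.natDegree using Nat.strong_induction_on generalizing f with
  | _ n ih =>
  obtain ⟨r, hr, hmin⟩ := isCompact_Icc.exists_isMinOn
    (nonempty_Icc.mpr (by norm_num : (-1 : ℝ) ≤ 1)) f.continuous.continuousOn
  rw [← sub_add_cancel f (C (f.eval r))]
  refine .add_C (hf r hr) ?_
  set g := f - C (f.eval r)
  have hg_nonneg : ∀ t ∈ Icc (-1 : ℝ) 1, 0 ≤ g.eval t := fun t ht => by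
    simpa [g] using hmin ht
  rcases eq_or_ne g 0 with hg | hg
  · rw [hg]
    exact .zero
  obtain ⟨q, k, hqk, hq, hq_pos, hmul⟩ :=
    exists_factor_of_eval_eq_zero hg hr hg_nonneg (by simp [g])
  have hk : k ≠ 0 := right_ne_zero_of_mul (hqk ▸ hg)
  have hdeg : q.natDegree + k.natDegree ≤ n := by
    rw [← natDegree_mul (left_ne_zero_of_mul (hqk ▸ hg)) hk, ← hqk, ← hn]
    exact (natDegree_sub_le f _).trans (by simp)
  have hk_nonneg : ∀ t ∈ Icc (-1 : ℝ) 1, 0 ≤ k.eval t :=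
    nonneg_on_Icc_of_nonneg_on_Ioo_of_ne k.continuous (by norm_num) fun t ht htr =>
      nonneg_of_mul_nonneg_right (by simpa [hqk] using hg_nonneg t (Ioo_subset_Icc_self ht))
        (hq_pos t ht htr)
  rw [hqk]
  exact (hmul _ _ (ih _ (by omega) hk_nonneg rfl)).mono (by omega)

/-- Fekete–Lukács representation of univariate polynomials nonnegative on
`[-1,1]` (Theorem `thm::markov-felete-lucas`). -/
theorem fekete_lukacs (f : Polynomial ℝ) (d : ℕ) (hd : f.natDegree = d)
    (hf : ∀ t ∈ Icc (-1 : ℝ) 1, 0 ≤ f.eval t) :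
    ∃ s₀ s₁ s₂ : Polynomial ℝ,
      IsSOS1 s₀ ∧ IsSOS1 s₁ ∧ IsSOS1 s₂ ∧
      s₀.natDegree ≤ d + 1 ∧
      (s₁ * (1 - X)).natDegree ≤ d + 1 ∧
      (s₂ * (1 + X)).natDegree ≤ d + 1 ∧
      f = s₀ + s₁ * (1 - X) + s₂ * (1 + X) := by
  obtain ⟨_, _, _, ⟨s₀, hs₀, rfl, h₀⟩, ⟨s₁, hs₁, rfl, h₁⟩, ⟨s₂, hs₂, rfl, h₂⟩, e⟩ :=
    (hd ▸ inTruncPreordering_of_nonneg hf).exists_three_terms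
  exact ⟨s₀, s₁, s₂, hs₀, hs₁, hs₂, by simpa using h₀, h₁, h₂, by rw [e, mul_one]⟩
end

section
/- Let C be a nonempty closed convex subset of Euclidean space ℝ^N, and let ℋ be the set of all pairs (c, b) ∈ ℝ^N × ℝ with ‖c‖₂ = 1 such that C ⊆ {x : c·x + b ≥ 0}. For ε ≥ 0 define C(ε) = ∩_{(c,b)∈ℋ} {x : c·x + b ≥ −ε}. Then the Hausdorff distance between C and C(ε) is at most ε. -/
open Metric Set RealInnerProductSpace

/-!
Every point of `C` lies in each relaxed half-space, so only points `x` of the relaxation outside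
`C` matter. For such `x`, let `p` be its nearest point in `C`. The half-space with inner unit
normal `(p - x) / ‖p - x‖` through `p` contains `C` (the projection satisfies
`⟪x - p, w - p⟫ ≤ 0` on `C`), and `x` lies at depth exactly `‖x - p‖ = infDist x C` outside it;
its `ε`-relaxation still contains `x`, so `infDist x C ≤ ε`.
-/

variable {E : Type*} [NormedAddCommGroup E] [InnerProductSpace ℝ E]

def unitSupportingHalfspaces (C : Set E) : Set (E × ℝ) :=
  {cb | ‖cb.1‖ = 1 ∧ C ⊆ {x | 0 ≤ ⟪cb.1, x⟫ + cb.2}}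

def halfspaceRelaxation (C : Set E) (ε : ℝ) : Set E :=
  ⋂ cb ∈ unitSupportingHalfspaces C, {x | -ε ≤ ⟪cb.1, x⟫ + cb.2}

theorem subset_halfspaceRelaxation {C : Set E} {ε : ℝ} (hε : 0 ≤ ε) :
    C ⊆ halfspaceRelaxation C ε := fun _ hx =>
  mem_iInter₂.2 fun _ hcb => le_trans (neg_nonpos.2 hε) (hcb.2 hx)

theorem inner_inv_norm_smul_add_neg_inner (v p w : E) :
    ⟪‖v‖⁻¹ • v, w⟫ + -⟪‖v‖⁻¹ • v, p⟫ = ‖v‖⁻¹ * ⟪v, w - p⟫ := by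
  rw [real_inner_smul_left, real_inner_smul_left, inner_sub_right]
  ring

theorem exists_mem_unitSupportingHalfspaces_eq_neg_infDist {C : Set E} (hne : C.Nonempty)
    (hC : IsComplete C) (hconv : Convex ℝ C) {x : E} (hx : x ∉ C) :
    ∃ cb ∈ unitSupportingHalfspaces C, ⟪cb.1, x⟫ + cb.2 = -infDist x C := by
  obtain ⟨p, hpC, hp⟩ := exists_norm_eq_iInf_of_complete_convex hne hC hconv x
  have hobtuse : ∀ w ∈ C, ⟪x - p, w - p⟫ ≤ 0 :=
    (norm_eq_iInf_iff_real_inner_le_zero hconv hpC).1 hp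
  have hdist : infDist x C = ‖p - x‖ := by
    rw [infDist_eq_iInf, norm_sub_rev, hp]
    simp only [dist_eq_norm]
  have hv : p - x ≠ 0 := sub_ne_zero.2 fun h => hx (h ▸ hpC)
  refine ⟨(‖p - x‖⁻¹ • (p - x), -⟪‖p - x‖⁻¹ • (p - x), p⟫),
    ⟨norm_smul_inv_norm hv, fun w hw => ?_⟩, ?_⟩
  · have := hobtuse w hw
    rw [mem_ofPred_eq, inner_inv_norm_smul_add_neg_inner, ← neg_sub x p, inner_neg_left]
    exact mul_nonneg (inv_nonneg.2 (norm_nonneg _)) (neg_nonneg.2 this)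
  · rw [inner_inv_norm_smul_add_neg_inner, ← neg_sub p x, inner_neg_right,
      real_inner_self_eq_norm_sq, hdist]
    field_simp [norm_ne_zero_iff.2 hv]

theorem infDist_le_of_mem_halfspaceRelaxation {C : Set E} (hne : C.Nonempty) (hC : IsComplete C)
    (hconv : Convex ℝ C) {ε : ℝ} (hε : 0 ≤ ε) {x : E} (hx : x ∈ halfspaceRelaxation C ε) :
    infDist x C ≤ ε := by
  by_cases hxC : x ∈ C
  · rwa [infDist_zero_of_mem hxC]
  · obtain ⟨cb, hcb, hdepth⟩ :=
      exists_mem_unitSupportingHalfspaces_eq_neg_infDist hne hC hconv hxC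
    have : -ε ≤ ⟪cb.1, x⟫ + cb.2 := mem_iInter₂.1 hx cb hcb
    linarith

theorem hausdorffDist_halfspaceRelaxation_le {C : Set E} (hne : C.Nonempty) (hC : IsComplete C)
    (hconv : Convex ℝ C) {ε : ℝ} (hε : 0 ≤ ε) :
    hausdorffDist C (halfspaceRelaxation C ε) ≤ ε :=
  hausdorffDist_le_of_infDist hε
    (fun x hx => by rw [infDist_zero_of_mem (subset_halfspaceRelaxation hε hx)]; exact hε)
    (fun _ hx => infDist_le_of_mem_halfspaceRelaxation hne hC hconv hε hx)

/-- a closed convex set and the intersection of the `ε`-relaxations of all its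
supporting half-spaces (with unit normals) are at Hausdorff distance at most `ε`
(Lemma `lem::convex_bound`). -/
theorem convex_halfspace_relaxation {N : ℕ}
    (C : Set (EuclideanSpace ℝ (Fin N))) (hne : C.Nonempty)
    (hclosed : IsClosed C) (hconv : Convex ℝ C)
    (ε : ℝ) (hε : 0 ≤ ε) :
    hausdorffDist C
      (⋂ cb ∈ {cb : EuclideanSpace ℝ (Fin N) × ℝ |
          ‖cb.1‖ = 1 ∧ C ⊆ {x | 0 ≤ inner ℝ cb.1 x + cb.2}},
        {x | -ε ≤ (inner ℝ cb.1 x : ℝ) + cb.2}) ≤ ε :=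
  hausdorffDist_halfspaceRelaxation_le hne hclosed.isComplete hconv hε
end

section
/- Let g = (g₁,…,g_r) be polynomials in ℝ[X₁,…,X_n] and suppose r₀² − (X₁² + ⋯ + X_n²) ∈ Q_{ℓ₀}(g) for some real r₀ > 0 and integer ℓ₀. Let t ≥ 1 and ℓ ≥ 2t − 2 + ℓ₀, and let L be a linear functional on polynomials of degree ≤ ℓ with L(1) = 1 and L(q) ≥ 0 for every q ∈ Q_ℓ(g). Then the Euclidean norm of the truncated pseudo-moment vector satisfies (Σ_{|α|≤2t} L(X^α)²)^{1/2} ≤ √C(n+t,t) · Σ_{k=0}^{t} r₀^{2k}, where C(n+t,t) is the binomial coefficient. -/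
open MvPolynomial Metric Set

noncomputable section

open MeasureTheory

/-- The multi-indices `α` with `|α| ≤ t`, a finite type of cardinality `C(n+t,t)`. -/
abbrev TruncIdx (n t : ℕ) := {α : Fin n →₀ ℕ // (∑ i, α i) ≤ t}

noncomputable instance truncIdxFintype (n t : ℕ) : Fintype (TruncIdx n t) :=
  Fintype.ofInjective
    (fun a => (fun i => (⟨a.1 i, Nat.lt_succ_of_le
        ((Finset.single_le_sum (f := fun j => a.1 j)
          (fun j _ => Nat.zero_le _) (Finset.mem_univ i)).trans a.2)⟩ : Fin (t + 1))))
    (by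
      intro a b hab
      apply Subtype.ext
      apply Finsupp.ext
      intro i
      simpa using congrArg Fin.val (congrFun hab i))

/-- The truncated pseudo-moment vector `L^{[t]}` of a linear functional `L`. -/
def truncOfFun {n : ℕ} (t : ℕ) (L : MvPoly n →ₗ[ℝ] ℝ) : EuclideanSpace ℝ (TruncIdx n t) :=
  WithLp.toLp 2 (fun α => L (monomial α.1 1))

/-- The truncated moment vector of a measure. -/
def momTrunc {n : ℕ} (t : ℕ) (μ : Measure (EuclideanSpace ℝ (Fin n))) :
    EuclideanSpace ℝ (TruncIdx n t) :=
  WithLp.toLp 2 (fun α => ∫ x, (∏ i, (x i) ^ (α.1 i)) ∂μ)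

/-- `M(S)^{[t]}`: truncated moment vectors of finite Borel measures supported on `S(g)`. -/
def MomentSet (n r t : ℕ) (g : Fin r → MvPoly n) : Set (EuclideanSpace ℝ (TruncIdx n t)) :=
  {v | ∃ μ : Measure (EuclideanSpace ℝ (Fin n)),
    IsFiniteMeasure μ ∧ μ (Sg g)ᶜ = 0 ∧ v = momTrunc t μ}

/-- `M^{(1)}(S)^{[t]}`: truncated moment vectors of Borel probability measures supported
on `S(g)`. -/
def ProbMomentSet (n r t : ℕ) (g : Fin r → MvPoly n) :
    Set (EuclideanSpace ℝ (TruncIdx n t)) :=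
  {v | ∃ μ : Measure (EuclideanSpace ℝ (Fin n)),
    IsProbabilityMeasure μ ∧ μ (Sg g)ᶜ = 0 ∧ v = momTrunc t μ}

/-- `L^{(1)}_ℓ(g)^{[t]}`: truncations of normalized linear functionals that are positive on
the truncated quadratic module `Q_ℓ(g)`. -/
def FuncSet (n r t ℓ : ℕ) (g : Fin r → MvPoly n) :
    Set (EuclideanSpace ℝ (TruncIdx n t)) :=
  {v | ∃ L : MvPoly n →ₗ[ℝ] ℝ, L 1 = 1 ∧ (∀ q, InQM g ℓ q → 0 ≤ L q) ∧ v = truncOfFun t L}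

namespace PMNB
open Finset

variable {n r : ℕ}

lemma isSOS_zero : IsSOS (0 : MvPoly n) := ⟨0, Fin.elim0, by simp⟩

lemma isSOS_finsetSum {ι : Type*} (s : Finset ι) (f : ι → MvPoly n) :
    IsSOS (∑ i ∈ s, (f i) ^ 2) := by
  classical
  refine ⟨s.card, fun j => f (s.equivFin.symm j).1, ?_⟩
  rw [← Finset.sum_coe_sort s (fun i => f i ^ 2)]
  exact (Equiv.sum_comp s.equivFin.symm (fun x => f x.1 ^ 2)).symm

lemma isSOS_mul {p q : MvPoly n} (hp : IsSOS p) (hq : IsSOS q) : IsSOS (p * q) := by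
  obtain ⟨k, a, rfl⟩ := hp
  obtain ⟨m, b, rfl⟩ := hq
  have h : (∑ i, a i ^ 2) * (∑ j, b j ^ 2) = ∑ x : Fin k × Fin m, (a x.1 * b x.2) ^ 2 := by
    rw [Finset.sum_mul_sum, Fintype.sum_prod_type]
    simp [mul_pow]
  rw [h]
  exact isSOS_finsetSum univ _

lemma inQM_of_isSOS {g : Fin r → MvPoly n} {ℓ : ℕ} {p : MvPoly n}
    (hp : IsSOS p) (hdeg : p.totalDegree ≤ ℓ) : InQM g ℓ p :=
  ⟨p, fun _ => 0, hp, fun _ => isSOS_zero, hdeg, by simp, by simp⟩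

lemma inQM_mul_sos {g : Fin r → MvPoly n} {ℓ₀ ℓ : ℕ} {p s : MvPoly n}
    (hp : InQM g ℓ₀ p) (hs : IsSOS s) (hdeg : s.totalDegree + ℓ₀ ≤ ℓ) :
    InQM g ℓ (s * p) := by
  obtain ⟨σ₀, σ, h0, h1, h2, h3, rfl⟩ := hp
  refine ⟨s * σ₀, fun i => s * σ i, isSOS_mul hs h0, fun i => isSOS_mul hs (h1 i), ?_, ?_, ?_⟩
  · exact le_trans (totalDegree_mul _ _) (le_trans (Nat.add_le_add_left h2 _) hdeg)
  · intro i
    rw [mul_assoc]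
    exact le_trans (totalDegree_mul _ _) (le_trans (Nat.add_le_add_left (h3 i) _) hdeg)
  · rw [mul_add, Finset.mul_sum]
    simp [mul_assoc]

lemma deg_monomial_le (β : Fin n →₀ ℕ) (x : ℝ) :
    (monomial β x).totalDegree ≤ ∑ i, β i := by
  by_cases hx : x = 0
  · simp [hx]
  · rw [totalDegree_monomial _ hx, Finsupp.sum_fintype _ _ (fun _ => rfl)]

lemma sq_monomial (β : Fin n →₀ ℕ) : (monomial β (1:ℝ)) ^ 2 = monomial (β + β) 1 := by
  rw [sq, monomial_mul, one_mul]

end PMNB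
namespace PMNB
open Finset

variable {n r : ℕ}

def Fpoly (n s : ℕ) : MvPoly n := ∑ β : TruncIdx n s, (monomial β.1 (1:ℝ)) ^ 2

lemma Fpoly_sos (n s : ℕ) : IsSOS (Fpoly n s) := isSOS_finsetSum _ _

lemma Fpoly_deg (n s : ℕ) : (Fpoly n s).totalDegree ≤ 2 * s := by
  refine le_trans (totalDegree_finset_sum _ _) (Finset.sup_le fun β _ => ?_)
  rw [sq_monomial]
  refine le_trans (deg_monomial_le _ _) ?_
  have h := β.2
  simp only [Finsupp.add_apply, Finset.sum_add_distrib]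
  omega

lemma exists_part (m : ℕ) (α : Fin n →₀ ℕ) (h : m ≤ ∑ i, α i) :
    ∃ β γ : Fin n →₀ ℕ, β + γ = α ∧ (∑ i, β i) = m := by
  induction m with
  | zero => exact ⟨0, α, by simp, by simp⟩
  | succ m ih =>
    obtain ⟨β, γ, hbg, hb⟩ := ih (le_trans (Nat.le_succ m) h)
    have hsum : (∑ i, β i) + (∑ i, γ i) = ∑ i, α i := by
      rw [← Finset.sum_add_distrib]
      exact Finset.sum_congr rfl fun i _ => by rw [← hbg]; rfl
    have hg : ∃ i, γ i ≠ 0 := by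
      by_contra hc
      push_neg at hc
      have : (∑ i, γ i) = 0 := Finset.sum_eq_zero fun i _ => hc i
      omega
    obtain ⟨i, hi⟩ := hg
    have hle : Finsupp.single i 1 ≤ γ := Finsupp.single_le_iff.2 (Nat.one_le_iff_ne_zero.2 hi)
    refine ⟨β + Finsupp.single i 1, γ - Finsupp.single i 1, ?_, ?_⟩
    · rw [add_assoc, add_tsub_cancel_of_le hle, hbg]
    · simp only [Finsupp.add_apply, Finset.sum_add_distrib, hb, Finsupp.single_apply]
      simp

lemma exists_split (t : ℕ) (α : Fin n →₀ ℕ) (h : (∑ i, α i) ≤ 2 * t) :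
    ∃ β γ : Fin n →₀ ℕ, β + γ = α ∧ (∑ i, β i) ≤ t ∧ (∑ i, γ i) ≤ t := by
  obtain ⟨β, γ, hbg, hb⟩ := exists_part ((∑ i, α i) - t) α (Nat.sub_le _ _)
  have hsum : (∑ i, β i) + (∑ i, γ i) = ∑ i, α i := by
    rw [← Finset.sum_add_distrib]
    exact Finset.sum_congr rfl fun i _ => by rw [← hbg]; rfl
  exact ⟨β, γ, hbg, by omega, by omega⟩

section Lfun
variable {g : Fin r → MvPoly n} {ℓ : ℕ} {L : MvPoly n →ₗ[ℝ] ℝ}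
  (hLpos : ∀ q, InQM g ℓ q → 0 ≤ L q)
include hLpos

lemma L_sos_nonneg {p : MvPoly n} (hp : IsSOS p) (hd : p.totalDegree ≤ ℓ) : 0 ≤ L p :=
  hLpos p (inQM_of_isSOS hp hd)

lemma L_sq_nonneg {p : MvPoly n} (hd : 2 * p.totalDegree ≤ ℓ) : 0 ≤ L (p ^ 2) := by
  refine L_sos_nonneg hLpos ⟨1, fun _ => p, by simp⟩ ?_
  refine le_trans (le_trans (totalDegree_pow p 2) ?_) hd
  omega

lemma L_cs {β γ : Fin n →₀ ℕ} (hβ : 2 * (∑ i, β i) ≤ ℓ) (hγ : 2 * (∑ i, γ i) ≤ ℓ) :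
    (L (monomial (β + γ) 1)) ^ 2 ≤ L ((monomial β 1) ^ 2) * L ((monomial γ 1) ^ 2) := by
  set a := L ((monomial γ (1:ℝ)) ^ 2) with ha
  set b := L (monomial (β + γ) (1:ℝ)) with hb
  set c := L ((monomial β (1:ℝ)) ^ 2) with hc
  have key : ∀ x : ℝ, 0 ≤ a * (x * x) + (2 * b) * x + c := by
    intro x
    have hdeg : 2 * (monomial β (1:ℝ) + C x * monomial γ 1).totalDegree ≤ ℓ := by
      have h1 : (monomial β (1:ℝ) + C x * monomial γ 1).totalDegree ≤
          max (∑ i, β i) (∑ i, γ i) := by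
        refine le_trans (totalDegree_add _ _) (max_le_max (deg_monomial_le _ _) ?_)
        rw [C_mul_monomial, mul_one]
        exact deg_monomial_le _ _
      have := max_le_max (le_refl 0) h1
      omega
    have h1 : 0 ≤ L ((monomial β (1:ℝ) + C x * monomial γ 1) ^ 2) := L_sq_nonneg hLpos hdeg
    have expand : (monomial β (1:ℝ) + C x * monomial γ 1) ^ 2
        = (x * x) • (monomial γ (1:ℝ)) ^ 2 + (2 * x) • monomial (β + γ) (1:ℝ)
          + (monomial β (1:ℝ)) ^ 2 := by
      have huv : monomial β (1:ℝ) * monomial γ 1 = monomial (β + γ) 1 := by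
        rw [monomial_mul, one_mul]
      rw [smul_eq_C_mul, smul_eq_C_mul, ← huv, map_mul, map_mul, map_ofNat]
      ring
    rw [expand, map_add, map_add, LinearMap.map_smul, LinearMap.map_smul, smul_eq_mul, smul_eq_mul] at h1
    rw [← ha, ← hb, ← hc] at h1
    linarith
  have hd := discrim_le_zero key
  rw [discrim] at hd
  nlinarith

end Lfun
end PMNB
namespace PMNB
open Finset

variable {n r : ℕ}

lemma sumA_le {g : Fin r → MvPoly n} {ℓ : ℕ} {L : MvPoly n →ₗ[ℝ] ℝ}
    (hLpos : ∀ q, InQM g ℓ q → 0 ≤ L q) {t : ℕ} (hℓt : 2 * t ≤ ℓ) :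
    (∑ α : TruncIdx n (2*t), (L (monomial α.1 1)) ^ 2)
      ≤ (∑ β : TruncIdx n t, L ((monomial β.1 1) ^ 2)) ^ 2 := by
  classical
  have hsplit : ∀ α : TruncIdx n (2*t), ∃ p : TruncIdx n t × TruncIdx n t,
      p.1.1 + p.2.1 = α.1 := by
    intro α
    obtain ⟨β, γ, h1, h2, h3⟩ := exists_split t α.1 α.2
    exact ⟨(⟨β, h2⟩, ⟨γ, h3⟩), h1⟩
  choose ψ hψ using hsplit
  have hinj : Function.Injective ψ := by
    intro α α' h
    apply Subtype.ext
    rw [← hψ α, ← hψ α', h]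
  have hnn : ∀ β : TruncIdx n t, 0 ≤ L ((monomial β.1 1) ^ 2) := by
    intro β
    refine L_sq_nonneg hLpos ?_
    have h1 := deg_monomial_le β.1 (1:ℝ)
    have h2 := β.2
    omega
  let f : TruncIdx n t × TruncIdx n t → ℝ :=
    fun p => L ((monomial p.1.1 1) ^ 2) * L ((monomial p.2.1 1) ^ 2)
  calc (∑ α : TruncIdx n (2*t), (L (monomial α.1 1)) ^ 2)
      ≤ ∑ α : TruncIdx n (2*t), f (ψ α) := by
        refine Finset.sum_le_sum fun α _ => ?_
        have h := L_cs hLpos (β := (ψ α).1.1) (γ := (ψ α).2.1)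
          (by have := (ψ α).1.2; omega) (by have := (ψ α).2.2; omega)
        rwa [hψ α] at h
    _ = ∑ p ∈ Finset.univ.image ψ, f p :=
        (Finset.sum_image (fun a _ b _ h => hinj h)).symm
    _ ≤ ∑ p : TruncIdx n t × TruncIdx n t, f p := by
        refine Finset.sum_le_sum_of_subset_of_nonneg (Finset.subset_univ _) ?_
        intro p _ _
        exact mul_nonneg (hnn p.1) (hnn p.2)
    _ = (∑ β : TruncIdx n t, L ((monomial β.1 1) ^ 2)) ^ 2 := by
        rw [sq, Finset.sum_mul_sum]
        exact Fintype.sum_prod_type f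

lemma ell0_ge_two (hn : 0 < n) {g : Fin r → MvPoly n} {ℓ₀ : ℕ} {r₀ : ℝ}
    (hball : InQM g ℓ₀ (C (r₀ ^ 2) - ∑ i, (X i : MvPoly n) ^ 2)) : 2 ≤ ℓ₀ := by
  obtain ⟨σ₀, σ, _, _, h2, h3, heq⟩ := hball
  have hdeg : (C (r₀ ^ 2) - ∑ i, (X i : MvPoly n) ^ 2).totalDegree ≤ ℓ₀ := by
    rw [heq]
    refine le_trans (totalDegree_add _ _) (max_le h2 ?_)
    exact le_trans (totalDegree_finset_sum _ _) (Finset.sup_le fun i _ => h3 i)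
  refine le_trans ?_ hdeg
  set i0 : Fin n := ⟨0, hn⟩
  have hcoeff : coeff (Finsupp.single i0 2) (C (r₀ ^ 2) - ∑ i, (X i : MvPoly n) ^ 2) = -1 := by
    rw [coeff_sub, coeff_C, if_neg, coeff_sum]
    · have hterm : ∀ i : Fin n,
          coeff (Finsupp.single i0 2) ((X i : MvPoly n) ^ 2)
            = if i = i0 then 1 else 0 := by
        intro i
        rw [X_pow_eq_monomial, coeff_monomial]
        simp [Finsupp.single_left_inj (two_ne_zero (α := ℕ))]
      simp [hterm]
    · intro hc
      have := congrArg (fun f : Fin n →₀ ℕ => f i0) hc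
      simp at this
  have hmem : Finsupp.single i0 2 ∈ (C (r₀ ^ 2) - ∑ i, (X i : MvPoly n) ^ 2).support := by
    rw [mem_support_iff, hcoeff]
    norm_num
  have := le_totalDegree hmem
  simpa using this

end PMNB
namespace PMNB
open Finset

variable {n r : ℕ}

lemma X_mul_mono (i : Fin n) (γ : Fin n →₀ ℕ) :
    (X i : MvPoly n) * monomial γ 1 = monomial (γ + Finsupp.single i 1) 1 := by
  rw [X, monomial_mul, one_mul, add_comm]

lemma truncIdx_unique : ∀ a : TruncIdx n 0, a = ⟨0, by simp⟩ := by
  intro a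
  apply Subtype.ext
  ext i
  have h := Nat.le_zero.1 a.2
  rw [Finset.sum_eq_zero_iff] at h
  simpa using h i (Finset.mem_univ i)

lemma Fpoly_zero : Fpoly n 0 = 1 := by
  haveI : Unique (TruncIdx n 0) := ⟨⟨⟨0, by simp⟩⟩, truncIdx_unique⟩
  rw [Fpoly, Fintype.sum_unique, truncIdx_unique default]
  simp [monomial_zero']

lemma Fpoly_bound (hn : 0 < n) {g : Fin r → MvPoly n} {ℓ₀ ℓ t : ℕ} {r₀ : ℝ} (hr₀ : 0 < r₀)
    (hball : InQM g ℓ₀ (C (r₀ ^ 2) - ∑ i, (X i : MvPoly n) ^ 2))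
    {L : MvPoly n →ₗ[ℝ] ℝ} (hL1 : L 1 = 1) (hLpos : ∀ q, InQM g ℓ q → 0 ≤ L q)
    (ht : 1 ≤ t) (hℓ : 2 * t - 2 + ℓ₀ ≤ ℓ) (hℓt : 2 * t ≤ ℓ) :
    ∀ s, s ≤ t → L (Fpoly n s) ≤ ∑ k ∈ Finset.range (s + 1), r₀ ^ (2 * k) := by
  classical
  intro s
  induction s with
  | zero =>
    intro _
    rw [Fpoly_zero, hL1]
    simp
  | succ s ih =>
    intro hst
    set P : MvPoly n := ∑ i, (X i : MvPoly n) ^ 2 with hP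
    -- the pairs indexing P * Fpoly n s
    set sq : Fin n × TruncIdx n s → MvPoly n :=
      fun p => ((X p.1 : MvPoly n) * monomial p.2.1 1) ^ 2 with hsq
    have hPF : P * Fpoly n s = ∑ p : Fin n × TruncIdx n s, sq p := by
      rw [hP, Fpoly, Finset.sum_mul_sum]
      rw [Fintype.sum_prod_type]
      simp [hsq, mul_pow]
    -- the nonzero indices of Fpoly n (s+1)
    set S : Finset (TruncIdx n (s+1)) := univ.filter (fun β => β.1 ≠ 0) with hS
    have hφex : ∀ β : TruncIdx n (s+1), ∃ p : Fin n × TruncIdx n s,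
        β.1 ≠ 0 → p.2.1 + Finsupp.single p.1 1 = β.1 := by
      intro β
      by_cases hβ : β.1 = 0
      · exact ⟨(⟨0, hn⟩, ⟨0, by simp⟩), fun h => absurd hβ h⟩
      · have : ∃ i, β.1 i ≠ 0 := by
          by_contra hc
          push_neg at hc
          exact hβ (by ext i; simpa using hc i)
        obtain ⟨i, hi⟩ := this
        have hle : Finsupp.single i 1 ≤ β.1 :=
          Finsupp.single_le_iff.2 (Nat.one_le_iff_ne_zero.2 hi)
        set γ0 : Fin n →₀ ℕ := β.1 - Finsupp.single i 1 with hγ0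
        have hcan : γ0 + Finsupp.single i 1 = β.1 := tsub_add_cancel_of_le hle
        have hsum : (∑ j, γ0 j) ≤ s := by
          have h1 : (∑ j, γ0 j) + (∑ j, Finsupp.single i 1 j) = ∑ j, β.1 j := by
            rw [← Finset.sum_add_distrib]
            exact Finset.sum_congr rfl fun j _ => by rw [← hcan]; rfl
          have h2 : (∑ j, Finsupp.single i 1 j) = 1 := by
            simp [Finsupp.single_apply]
          have h3 := β.2
          omega
        exact ⟨(i, ⟨γ0, hsum⟩), fun _ => hcan⟩
    choose φ hφ using hφex
    have hφinjS : Set.InjOn φ S := by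
      intro a ha b hb h
      rw [hS, Finset.mem_coe, Finset.mem_filter] at ha hb
      apply Subtype.ext
      rw [← hφ a ha.2, ← hφ b hb.2, h]
    have hsqφ : ∀ β ∈ S, sq (φ β) = (monomial β.1 (1:ℝ)) ^ 2 := by
      intro β hβ
      rw [hS, Finset.mem_filter] at hβ
      show ((X (φ β).1 : MvPoly n) * monomial (φ β).2.1 1) ^ 2 = _
      rw [X_mul_mono, hφ β hβ.2]
    -- decompose Fpoly n (s+1)
    have hfilter : univ.filter (fun β : TruncIdx n (s+1) => ¬ β.1 ≠ 0)
        = {⟨0, by simp⟩} := by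
      ext β
      simp only [Finset.mem_filter, Finset.mem_univ, true_and, not_not,
        Finset.mem_singleton, Subtype.ext_iff]
    have hFsplit : Fpoly n (s+1) = 1 + ∑ β ∈ S, (monomial β.1 (1:ℝ)) ^ 2 := by
      rw [Fpoly, ← Finset.sum_filter_add_sum_filter_not univ (fun β => β.1 ≠ 0), hfilter]
      rw [Finset.sum_singleton]
      rw [add_comm]
      simp
      rfl
    -- rewrite sum over S as sum over image of φ
    have hSsum : ∑ β ∈ S, (monomial β.1 (1:ℝ)) ^ 2 = ∑ p ∈ S.image φ, sq p := by
      rw [Finset.sum_image hφinjS]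
      exact (Finset.sum_congr rfl hsqφ).symm
    -- the SOS remainder
    have hD : ∑ p : Fin n × TruncIdx n s, sq p
        = (∑ p ∈ S.image φ, sq p) + ∑ p ∈ univ \ S.image φ, sq p := by
      rw [add_comm, Finset.sum_sdiff (Finset.subset_univ _)]
    set D : MvPoly n := ∑ p ∈ univ \ S.image φ, sq p with hDdef
    have hDsos : IsSOS D := isSOS_finsetSum _ _
    have hDdeg : D.totalDegree ≤ 2 * t := by
      refine le_trans (totalDegree_finset_sum _ _) (Finset.sup_le fun p _ => ?_)
      show (((X p.1 : MvPoly n) * monomial p.2.1 1) ^ 2).totalDegree ≤ 2 * t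
      rw [X_mul_mono, sq_monomial]
      refine le_trans (deg_monomial_le _ _) ?_
      have h2 := p.2.2
      have h3 : (∑ j, Finsupp.single p.1 1 j) = 1 := by simp [Finsupp.single_apply]
      simp only [Finsupp.add_apply, Finset.sum_add_distrib, h3]
      omega
    -- key identity
    have hkey : Fpoly n (s+1) + D = 1 + P * Fpoly n s := by
      rw [hFsplit, hPF, hD, hSsum, add_assoc]
    -- apply L
    have hLD : 0 ≤ L D := L_sos_nonneg hLpos hDsos (le_trans hDdeg hℓt)
    have hQM : InQM g ℓ (Fpoly n s * (C (r₀ ^ 2) - P)) := by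
      refine inQM_mul_sos hball (Fpoly_sos n s) ?_
      have := Fpoly_deg n s
      omega
    have hLQ : 0 ≤ L (Fpoly n s * (C (r₀ ^ 2) - P)) := hLpos _ hQM
    have hexp : Fpoly n s * (C (r₀ ^ 2) - P) = (r₀ ^ 2) • Fpoly n s - P * Fpoly n s := by
      rw [smul_eq_C_mul]
      ring
    rw [hexp, map_sub, LinearMap.map_smul, smul_eq_mul] at hLQ
    have hLP : L (P * Fpoly n s) ≤ r₀ ^ 2 * L (Fpoly n s) := by linarith
    have hLF : L (Fpoly n (s+1)) ≤ 1 + L (P * Fpoly n s) := by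
      have := congrArg L hkey
      rw [map_add, map_add, hL1] at this
      linarith
    have hih := ih (by omega)
    have hfin : L (Fpoly n (s+1)) ≤ 1 + r₀ ^ 2 * ∑ k ∈ Finset.range (s + 1), r₀ ^ (2 * k) := by
      have h4 : r₀ ^ 2 * L (Fpoly n s) ≤ r₀ ^ 2 * ∑ k ∈ Finset.range (s + 1), r₀ ^ (2 * k) :=
        mul_le_mul_of_nonneg_left hih (by positivity)
      linarith
    refine le_trans hfin ?_
    rw [Finset.sum_range_succ' (fun k => r₀ ^ (2 * k)) (s + 1)]
    rw [Finset.mul_sum]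
    have h5 : ∀ k, r₀ ^ 2 * r₀ ^ (2 * k) = r₀ ^ (2 * (k + 1)) := by
      intro k
      rw [← pow_add]
      ring_nf
    simp only [h5]
    simp [add_comm]

end PMNB
/-- bound on the Euclidean norm of the truncated pseudo-moment vector of a
normalized positive linear functional (Lemma `lem::moment_norm`). -/
theorem pseudo_moment_norm_bound {n r : ℕ} (g : Fin r → MvPoly n)
    (r₀ : ℝ) (hr₀ : 0 < r₀) (ℓ₀ : ℕ)
    (hball : InQM g ℓ₀ (MvPolynomial.C (r₀ ^ 2) - ∑ i, (X i : MvPoly n) ^ 2))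
    (t ℓ : ℕ) (ht : 1 ≤ t) (hℓ : 2 * t - 2 + ℓ₀ ≤ ℓ)
    (L : MvPoly n →ₗ[ℝ] ℝ) (hL1 : L 1 = 1)
    (hLpos : ∀ q, InQM g ℓ q → 0 ≤ L q) :
    Real.sqrt (∑ α : TruncIdx n (2 * t), (L (monomial α.1 1)) ^ 2) ≤
      Real.sqrt ((n + t).choose t) * ∑ k ∈ Finset.range (t + 1), r₀ ^ (2 * k) := by
  classical
  have hsum1 : (1:ℝ) ≤ ∑ k ∈ Finset.range (t + 1), r₀ ^ (2 * k) := by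
    calc (1:ℝ) = r₀ ^ (2 * 0) := by norm_num
      _ ≤ ∑ k ∈ Finset.range (t + 1), r₀ ^ (2 * k) :=
          Finset.single_le_sum (f := fun k => r₀ ^ (2 * k))
            (fun k _ => by positivity) (Finset.mem_range.2 (by omega))
  have hC1 : (1:ℝ) ≤ Real.sqrt ((n + t).choose t) := by
    rw [show (1:ℝ) = Real.sqrt 1 from Real.sqrt_one.symm]
    apply Real.sqrt_le_sqrt
    exact_mod_cast Nat.choose_pos (Nat.le_add_left t n)
  rcases Nat.eq_zero_or_pos n with hn | hn
  · subst hn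
    haveI : Unique (TruncIdx 0 (2 * t)) :=
      ⟨⟨⟨0, by simp⟩⟩, fun a => Subtype.ext (by ext i; exact i.elim0)⟩
    rw [Fintype.sum_unique]
    have hd : (default : TruncIdx 0 (2 * t)).1 = 0 := by ext i; exact i.elim0
    rw [hd, monomial_zero', C_1, hL1, one_pow, Real.sqrt_one]
    calc (1:ℝ) ≤ 1 * 1 := by norm_num
      _ ≤ Real.sqrt ((0 + t).choose t) * ∑ k ∈ Finset.range (t + 1), r₀ ^ (2 * k) :=
          mul_le_mul hC1 hsum1 zero_le_one (le_trans zero_le_one hC1)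
  · have hℓ2 : 2 ≤ ℓ₀ := PMNB.ell0_ge_two hn hball
    have hℓt : 2 * t ≤ ℓ := by omega
    have hA := PMNB.sumA_le hLpos hℓt
    have hB := PMNB.Fpoly_bound hn hr₀ hball hL1 hLpos ht hℓ hℓt t le_rfl
    have hFL : L (PMNB.Fpoly n t) = ∑ β : TruncIdx n t, L ((monomial β.1 1) ^ 2) :=
      map_sum L _ _
    have hF0 : 0 ≤ L (PMNB.Fpoly n t) :=
      PMNB.L_sos_nonneg hLpos (PMNB.Fpoly_sos n t) (le_trans (PMNB.Fpoly_deg n t) hℓt)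
    calc Real.sqrt (∑ α : TruncIdx n (2 * t), (L (monomial α.1 1)) ^ 2)
        ≤ Real.sqrt ((L (PMNB.Fpoly n t)) ^ 2) := Real.sqrt_le_sqrt (by rw [hFL]; exact hA)
      _ = L (PMNB.Fpoly n t) := Real.sqrt_sq hF0
      _ ≤ ∑ k ∈ Finset.range (t + 1), r₀ ^ (2 * k) := hB
      _ ≤ Real.sqrt ((n + t).choose t) * ∑ k ∈ Finset.range (t + 1), r₀ ^ (2 * k) :=
          le_mul_of_one_le_left (le_trans zero_le_one hsum1) hC1

end
end
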